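/- arXiv:2201.01327 — 7 statements merged into one kernel-verified Lean document; each statement's English description precedes it below -/
import Mathlib

section
/- Let f : ℝ≥0 → ℝ be a monotonically decreasing non-negative function that decays faster than any power, i.e. for every α ∈ ℕ, sup_{r ≥ 0} (1+r)^α f(r) < ∞. Then there exists a monotonically decreasing non-negative function g : ℝ≥0 → ℝ decaying faster than any power, with g(r) ≥ f(r) for all r, and a constant A > 0 such that g(r)·g(s) ≤ A·g(r+s) for all r, s ≥ 0. -/
open Real

/-- Auxiliary: polynomial times decaying exponential is bounded. -/
lemma aux_poly_exp_bound (n : ℕ) :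
    ∃ D : ℝ, 0 ≤ D ∧ ∀ x : ℝ, 0 ≤ x → (1 + x) ^ n * Real.exp (-x) ≤ D := by
  refine ⟨2 ^ n * (1 + n.factorial), by positivity, fun x hx => ?_⟩
  have hmax : (1 + x) ^ n ≤ 2 ^ n * (1 + x ^ n) := by
    have h1 : (1 + x) ^ n ≤ (2 * max 1 x) ^ n := by
      apply pow_le_pow_left₀ (by linarith)
      have := le_max_left (1:ℝ) x
      have := le_max_right (1:ℝ) x
      linarith
    have h2 : (2 * max 1 x) ^ n = 2 ^ n * (max 1 x) ^ n := by rw [mul_pow]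
    have h3 : (max 1 x) ^ n ≤ 1 + x ^ n := by
      rcases le_total x 1 with hx1 | hx1
      · rw [max_eq_left hx1]
        simp only [one_pow]
        nlinarith [pow_nonneg hx n]
      · rw [max_eq_right hx1]
        nlinarith [pow_nonneg hx n]
    calc (1 + x) ^ n ≤ 2 ^ n * (max 1 x) ^ n := by rw [← h2]; exact h1
      _ ≤ 2 ^ n * (1 + x ^ n) := by
          apply mul_le_mul_of_nonneg_left h3 (by positivity)
  have hxe : x ^ n * Real.exp (-x) ≤ n.factorial := by
    have h := Real.pow_div_factorial_le_exp x hx n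
    have hfpos : (0:ℝ) < n.factorial := by positivity
    have hexp : (0:ℝ) < Real.exp x := Real.exp_pos x
    rw [div_le_iff₀ hfpos] at h
    rw [Real.exp_neg]
    rw [mul_inv_le_iff₀ hexp]
    nlinarith [h]
  have hexppos : (0:ℝ) < Real.exp (-x) := Real.exp_pos _
  have hle1 : Real.exp (-x) ≤ 1 := Real.exp_le_one_iff.mpr (by linarith)
  calc (1 + x) ^ n * Real.exp (-x) ≤ (2 ^ n * (1 + x ^ n)) * Real.exp (-x) :=
        mul_le_mul_of_nonneg_right hmax (le_of_lt hexppos)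
    _ = 2 ^ n * (Real.exp (-x) + x ^ n * Real.exp (-x)) := by ring
    _ ≤ 2 ^ n * (1 + n.factorial) := by
        apply mul_le_mul_of_nonneg_left _ (by positivity)
        linarith

/-- Lemma: any monotonically decreasing non-negative function decaying faster than any
power is upper-bounded by one which is in addition "weakly reproducing":
`g r * g s ≤ A * g (r + s)`. -/
theorem stmt_0 (f : ℝ → ℝ)
    (hf_nonneg : ∀ r, 0 ≤ r → 0 ≤ f r)
    (hf_anti : ∀ r s, 0 ≤ r → r ≤ s → f s ≤ f r)
    (hf_decay : ∀ α : ℕ, ∃ M : ℝ, ∀ r, 0 ≤ r → (1 + r) ^ α * f r ≤ M) :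
    ∃ (g : ℝ → ℝ) (A : ℝ),
      (∀ r, 0 ≤ r → 0 ≤ g r) ∧
      (∀ r s, 0 ≤ r → r ≤ s → g s ≤ g r) ∧
      (∀ α : ℕ, ∃ M : ℝ, ∀ r, 0 ≤ r → (1 + r) ^ α * g r ≤ M) ∧
      (∀ r, 0 ≤ r → f r ≤ g r) ∧
      0 < A ∧
      (∀ r s, 0 ≤ r → 0 ≤ s → g r * g s ≤ A * g (r + s)) := by
  -- the regularized function f₁, strictly positive
  set f₁ : ℝ → ℝ := fun r => f r + (f 0 + 1) * Real.exp (-r) with hf₁def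
  have hf00 : 0 ≤ f 0 := hf_nonneg 0 le_rfl
  have hf₁pos : ∀ r, 0 ≤ r → 0 < f₁ r := by
    intro r hr
    have h1 : 0 < (f 0 + 1) * Real.exp (-r) := by positivity
    have := hf_nonneg r hr
    simp only [hf₁def]; linarith
  have hf₁anti : ∀ r s, 0 ≤ r → r ≤ s → f₁ s ≤ f₁ r := by
    intro r s hr hrs
    have h1 := hf_anti r s hr hrs
    have h2 : Real.exp (-s) ≤ Real.exp (-r) := Real.exp_le_exp.mpr (by linarith)
    have h3 : (0:ℝ) ≤ f 0 + 1 := by linarith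
    simp only [hf₁def]
    nlinarith
  -- the constant K
  set K : ℝ := Real.exp 1 * f₁ 0 with hKdef
  have hf₁0pos : 0 < f₁ 0 := hf₁pos 0 le_rfl
  have hKpos : 0 < K := by positivity
  have hlogK : Real.log K = 1 + Real.log (f₁ 0) := by
    rw [hKdef, Real.log_mul (ne_of_gt (Real.exp_pos 1)) (ne_of_gt hf₁0pos), Real.log_exp]
  -- the function h
  set h : ℝ → ℝ := fun t => Real.log K - Real.log (f₁ t) with hhdef
  have hh1 : ∀ t, 0 ≤ t → 1 ≤ h t := by
    intro t ht
    have h1 : Real.log (f₁ t) ≤ Real.log (f₁ 0) :=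
      Real.log_le_log (hf₁pos t ht) (hf₁anti 0 t le_rfl ht)
    simp only [hhdef, hlogK]; linarith
  have hhmono : ∀ t u, 0 ≤ t → t ≤ u → h t ≤ h u := by
    intro t u ht htu
    have h1 : Real.log (f₁ u) ≤ Real.log (f₁ t) :=
      Real.log_le_log (hf₁pos u (le_trans ht htu)) (hf₁anti t u ht htu)
    simp only [hhdef]; linarith
  have hf₁eq : ∀ t, 0 ≤ t → f₁ t = K * Real.exp (-h t) := by
    intro t ht
    simp only [hhdef]
    rw [neg_sub, Real.exp_sub, Real.exp_log (hf₁pos t ht), Real.exp_log hKpos]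
    field_simp
  -- the partition sets and θ
  set S : ℝ → Set ℝ := fun r =>
    {x | ∃ l : List ℝ, (∀ t ∈ l, 0 ≤ t) ∧ r ≤ l.sum ∧ x = (l.map h).sum} with hSdef
  set θ : ℝ → ℝ := fun r => sInf (S r) with hθdef
  have hSne : ∀ r, (S r).Nonempty := by
    intro r
    refine ⟨(([max r 0].map h)).sum, [max r 0], ?_, ?_, rfl⟩
    · intro t ht
      simp only [List.mem_singleton] at ht
      subst ht; exact le_max_right r 0
    · simp [le_max_left]
  have hSnonneg : ∀ r, ∀ x ∈ S r, 0 ≤ x := by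
    rintro r x ⟨l, hl, _, rfl⟩
    apply List.sum_nonneg
    intro y hy
    obtain ⟨t, htl, rfl⟩ := List.mem_map.mp hy
    exact le_trans zero_le_one (hh1 t (hl t htl))
  have hSbdd : ∀ r, BddBelow (S r) := fun r => ⟨0, fun x hx => hSnonneg r x hx⟩
  have hθnonneg : ∀ r, 0 ≤ θ r := fun r => le_csInf (hSne r) (hSnonneg r)
  have hθ_le_h : ∀ r, 0 ≤ r → θ r ≤ h r := by
    intro r hr
    apply csInf_le (hSbdd r)
    exact ⟨[r], by intro t ht; simp only [List.mem_singleton] at ht; subst ht; exact hr,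
      by simp, by simp⟩
  have hθmono : ∀ r s, r ≤ s → θ r ≤ θ s := by
    intro r s hrs
    apply csInf_le_csInf (hSbdd r) (hSne s)
    rintro x ⟨l, hl, hsum, rfl⟩
    exact ⟨l, hl, le_trans hrs hsum, rfl⟩
  have hθsubadd : ∀ r s : ℝ, θ (r + s) ≤ θ r + θ s := by
    intro r s
    have key : ∀ a ∈ S r, ∀ b ∈ S s, θ (r + s) ≤ a + b := by
      rintro a ⟨l₁, hl₁, hs₁, rfl⟩ b ⟨l₂, hl₂, hs₂, rfl⟩
      apply csInf_le (hSbdd (r + s))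
      refine ⟨l₁ ++ l₂, ?_, ?_, ?_⟩
      · intro t ht
        rcases List.mem_append.mp ht with h' | h'
        · exact hl₁ t h'
        · exact hl₂ t h'
      · rw [List.sum_append]; exact add_le_add hs₁ hs₂
      · rw [List.map_append, List.sum_append]
    have step : ∀ a ∈ S r, θ (r + s) - a ≤ θ s := by
      intro a ha
      apply le_csInf (hSne s)
      intro b hb
      linarith [key a ha b hb]
    have : θ (r + s) - θ s ≤ θ r := by
      apply le_csInf (hSne r)
      intro a ha
      linarith [step a ha]
    linarith
  -- lower bound for θ
  have hθlb : ∀ β : ℕ, ∃ C : ℝ, ∀ r, 0 ≤ r →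
      min (Real.sqrt r) ((β : ℝ) * Real.log (1 + r) - C) ≤ θ r := by
    intro β
    obtain ⟨b, hb⟩ := hf_decay (2 * β)
    obtain ⟨D, hD0, hD⟩ := aux_poly_exp_bound (2 * β)
    set B : ℝ := max (b + (f 0 + 1) * D) 1 with hBdef
    have hBpos : 0 < B := lt_of_lt_of_le one_pos (le_max_right _ _)
    have hf₁le : ∀ t, 0 ≤ t → (1 + t) ^ (2 * β) * f₁ t ≤ B := by
      intro t ht
      have h1 := hb t ht
      have h2 : (1 + t) ^ (2 * β) * ((f 0 + 1) * Real.exp (-t)) ≤ (f 0 + 1) * D := by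
        have := hD t ht
        nlinarith
      have h3 : b + (f 0 + 1) * D ≤ B := le_max_left _ _
      simp only [hf₁def]
      calc (1 + t) ^ (2 * β) * (f t + (f 0 + 1) * Real.exp (-t))
          = (1 + t) ^ (2 * β) * f t + (1 + t) ^ (2 * β) * ((f 0 + 1) * Real.exp (-t)) := by ring
        _ ≤ b + (f 0 + 1) * D := add_le_add h1 h2
        _ ≤ B := h3
    refine ⟨Real.log B - Real.log K, fun r hr => ?_⟩
    apply le_csInf (hSne r)
    rintro x ⟨l, hl, hsum, rfl⟩
    set k := l.length with hkdef
    have hsum1 : (k : ℝ) ≤ (l.map h).sum := by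
      have : (l.map (fun _ => (1:ℝ))).sum ≤ (l.map h).sum :=
        List.sum_le_sum (fun t ht => hh1 t (hl t ht))
      simpa using this
    rcases eq_or_lt_of_le hr with hr0 | hr0
    · -- r = 0 : min ≤ 0 ≤ sum
      have hx0 : 0 ≤ (l.map h).sum := by
        apply List.sum_nonneg
        intro y hy
        obtain ⟨u, hul, rfl⟩ := List.mem_map.mp hy
        exact le_trans zero_le_one (hh1 u (hl u hul))
      have : min (Real.sqrt r) ((β : ℝ) * Real.log (1 + r) - (Real.log B - Real.log K)) ≤ 0 := by
        apply le_trans (min_le_left _ _)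
        rw [← hr0, Real.sqrt_zero]
      linarith
    rcases le_or_gt (Real.sqrt r) (k : ℝ) with hk | hk
    · exact le_trans (min_le_left _ _) (le_trans hk hsum1)
    · -- some element is at least √r
      have hrs0 : 0 ≤ Real.sqrt r := Real.sqrt_nonneg r
      have hsr : 0 < Real.sqrt r := Real.sqrt_pos.mpr hr0
      have hex : ∃ t ∈ l, Real.sqrt r ≤ t := by
        by_contra hcon
        push_neg at hcon
        have hsum2 : l.sum ≤ (k : ℝ) * Real.sqrt r := by
          have : (l.map (fun t => t)).sum ≤ (l.map (fun _ => Real.sqrt r)).sum :=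
            List.sum_le_sum (fun t ht => le_of_lt (hcon t ht))
          simpa [List.map_id'] using this
        have hrr : (k : ℝ) * Real.sqrt r < Real.sqrt r * Real.sqrt r :=
          mul_lt_mul_of_pos_right hk hsr
        rw [Real.mul_self_sqrt hr] at hrr
        linarith
      obtain ⟨t, htl, hts⟩ := hex
      have hht : h (Real.sqrt r) ≤ h t := hhmono _ t hrs0 hts
      have hsingle : h t ≤ (l.map h).sum :=
        List.single_le_sum (fun y hy => by
          obtain ⟨u, hul, rfl⟩ := List.mem_map.mp hy
          exact le_trans zero_le_one (hh1 u (hl u hul)))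
          (h t) (List.mem_map_of_mem (f := h) htl)
      have hlow : (β : ℝ) * Real.log (1 + r) - (Real.log B - Real.log K) ≤ h (Real.sqrt r) := by
        have hf₁s : f₁ (Real.sqrt r) ≤ B / (1 + Real.sqrt r) ^ (2 * β) := by
          have := hf₁le (Real.sqrt r) hrs0
          have hp : (0:ℝ) < (1 + Real.sqrt r) ^ (2 * β) := by positivity
          rw [le_div_iff₀ hp]
          linarith [this]
        have hlog1 : Real.log (f₁ (Real.sqrt r)) ≤
            Real.log B - (2 * β : ℕ) * Real.log (1 + Real.sqrt r) := by
          have hp : (0:ℝ) < (1 + Real.sqrt r) ^ (2 * β) := by positivity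
          have := Real.log_le_log (hf₁pos _ hrs0) hf₁s
          rw [Real.log_div (ne_of_gt hBpos) (ne_of_gt hp), Real.log_pow] at this
          exact this
        have hsq : Real.log (1 + r) ≤ 2 * Real.log (1 + Real.sqrt r) := by
          have h1 : (1 + r) ≤ (1 + Real.sqrt r) ^ 2 := by
            have := Real.sq_sqrt hr
            nlinarith [Real.sqrt_nonneg r]
          have h2 := Real.log_le_log (by linarith) h1
          rw [Real.log_pow] at h2
          push_cast at h2
          linarith
        simp only [hhdef]
        push_cast at hlog1
        nlinarith [Real.log_nonneg (by linarith : (1:ℝ) ≤ 1 + Real.sqrt r)]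
      exact le_trans (min_le_right _ _) (le_trans hlow (le_trans hht hsingle))
  -- define g
  set g : ℝ → ℝ := fun r => K * Real.exp (-θ r) with hgdef
  refine ⟨g, K, ?_, ?_, ?_, ?_, hKpos, ?_⟩
  · intro r _; simp only [hgdef]; positivity
  · intro r s _ hrs
    simp only [hgdef]
    apply mul_le_mul_of_nonneg_left _ (le_of_lt hKpos)
    exact Real.exp_le_exp.mpr (by linarith [hθmono r s hrs])
  · -- decay
    intro α
    obtain ⟨C, hC⟩ := hθlb α
    obtain ⟨D, hD0, hD⟩ := aux_poly_exp_bound (2 * α)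
    refine ⟨K * (D + Real.exp C), fun r hr => ?_⟩
    have hlb := hC r hr
    have h1r : (0:ℝ) < 1 + r := by linarith
    rcases le_total (Real.sqrt r) ((α : ℝ) * Real.log (1 + r) - C) with hm | hm
    · -- min is √r : θ r ≥ √r
      rw [min_eq_left hm] at hlb
      have he : Real.exp (-θ r) ≤ Real.exp (-Real.sqrt r) := Real.exp_le_exp.mpr (by linarith)
      have hpow : (1 + r) ^ α ≤ (1 + Real.sqrt r) ^ (2 * α) := by
        have h1 : (1 + r) ≤ (1 + Real.sqrt r) ^ 2 := by
          have := Real.sq_sqrt hr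
          nlinarith [Real.sqrt_nonneg r]
        calc (1 + r) ^ α ≤ ((1 + Real.sqrt r) ^ 2) ^ α :=
              pow_le_pow_left₀ (by linarith) h1 α
          _ = (1 + Real.sqrt r) ^ (2 * α) := by rw [← pow_mul]
      have hb : (1 + r) ^ α * Real.exp (-θ r) ≤ D := by
        calc (1 + r) ^ α * Real.exp (-θ r)
            ≤ (1 + Real.sqrt r) ^ (2 * α) * Real.exp (-Real.sqrt r) := by
              apply mul_le_mul hpow he (le_of_lt (Real.exp_pos _)) (by positivity)
          _ ≤ D := hD _ (Real.sqrt_nonneg r)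
      simp only [hgdef]
      calc (1 + r) ^ α * (K * Real.exp (-θ r)) = K * ((1 + r) ^ α * Real.exp (-θ r)) := by ring
        _ ≤ K * D := mul_le_mul_of_nonneg_left hb (le_of_lt hKpos)
        _ ≤ K * (D + Real.exp C) := by nlinarith [Real.exp_pos C, hKpos]
    · -- min is the log term
      rw [min_eq_right hm] at hlb
      have he : Real.exp (-θ r) ≤ Real.exp (C - (α : ℝ) * Real.log (1 + r)) :=
        Real.exp_le_exp.mpr (by linarith)
      have hexp : Real.exp ((α : ℝ) * Real.log (1 + r)) = (1 + r) ^ α := by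
        rw [Real.exp_nat_mul, Real.exp_log h1r]
      have hb : (1 + r) ^ α * Real.exp (-θ r) ≤ Real.exp C := by
        calc (1 + r) ^ α * Real.exp (-θ r)
            ≤ (1 + r) ^ α * Real.exp (C - (α : ℝ) * Real.log (1 + r)) := by
              apply mul_le_mul_of_nonneg_left he (by positivity)
          _ = Real.exp C * ((1 + r) ^ α * Real.exp (-((α:ℝ) * Real.log (1 + r)))) := by
              rw [Real.exp_sub, Real.exp_neg]; ring
          _ = Real.exp C := by
              rw [Real.exp_neg, hexp]
              field_simp
      simp only [hgdef]
      calc (1 + r) ^ α * (K * Real.exp (-θ r)) = K * ((1 + r) ^ α * Real.exp (-θ r)) := by ring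
        _ ≤ K * Real.exp C := mul_le_mul_of_nonneg_left hb (le_of_lt hKpos)
        _ ≤ K * (D + Real.exp C) := by nlinarith [hKpos, hD0]
  · -- f ≤ g
    intro r hr
    have h1 : f r ≤ f₁ r := by
      simp only [hf₁def]
      nlinarith [Real.exp_pos (-r), hf00]
    have h2 : f₁ r = K * Real.exp (-h r) := hf₁eq r hr
    have h3 : Real.exp (-h r) ≤ Real.exp (-θ r) :=
      Real.exp_le_exp.mpr (by linarith [hθ_le_h r hr])
    simp only [hgdef]
    calc f r ≤ f₁ r := h1
      _ = K * Real.exp (-h r) := h2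
      _ ≤ K * Real.exp (-θ r) := mul_le_mul_of_nonneg_left h3 (le_of_lt hKpos)
  · -- submultiplicativity
    intro r s _ _
    simp only [hgdef]
    have h1 : Real.exp (-θ r) * Real.exp (-θ s) = Real.exp (-(θ r + θ s)) := by
      rw [← Real.exp_add]; ring_nf
    have h2 : Real.exp (-(θ r + θ s)) ≤ Real.exp (-θ (r + s)) :=
      Real.exp_le_exp.mpr (by linarith [hθsubadd r s])
    calc K * Real.exp (-θ r) * (K * Real.exp (-θ s))
        = K * (K * (Real.exp (-θ r) * Real.exp (-θ s))) := by ring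
      _ = K * (K * Real.exp (-(θ r + θ s))) := by rw [h1]
      _ ≤ K * (K * Real.exp (-θ (r + s))) := by
          apply mul_le_mul_of_nonneg_left _ (le_of_lt hKpos)
          exact mul_le_mul_of_nonneg_left h2 (le_of_lt hKpos)
end

section
/- Every monotonically decreasing non-negative function f on ℝ≥0 that decays faster than any power can be upper-bounded by a monotonically decreasing non-negative function g that decays faster than any power and is reproducing for a given uniformly discrete set Λ ⊂ ℝ^d: there exists C > 0 with ∑_{l∈Λ} g(|j−l|)g(|l−k|) ≤ C·g(|j−k|) for all j,k ∈ Λ. -/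
open Finset

namespace Stmt4Aux

/-- target values `V k = k(k+1)/2`. -/
noncomputable def Vv (k : ℕ) : ℝ := (k : ℝ) * (k + 1) / 2

lemma Vv_zero : Vv 0 = 0 := by simp [Vv]

lemma Vv_succ (k : ℕ) : Vv (k + 1) = Vv k + (k + 1) := by
  simp only [Vv]; push_cast; ring

lemma Vv_nonneg (k : ℕ) : 0 ≤ Vv k := by
  have : (0:ℝ) ≤ (k:ℝ) := Nat.cast_nonneg k
  simp only [Vv]; positivity

lemma Vv_mono : Monotone Vv := by
  refine monotone_nat_of_le_succ fun k => ?_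
  rw [Vv_succ]; nlinarith [Nat.cast_nonneg (α := ℝ) k]

/-- candidate radius with exponent `n` at level `V (k+2)`. -/
noncomputable def Qq (Mc : ℕ → ℝ) (n k : ℕ) : ℝ :=
  Real.exp ((Real.log (Mc n) + Vv (k + 2)) / n)

/-- radius ensuring `f ≤ exp (-(V (k+2)))` beyond it. -/
noncomputable def Rr (Mc : ℕ → ℝ) (k : ℕ) : ℝ :=
  (Finset.Icc 1 (k + 1)).inf' (by simp) (fun n => Qq Mc n k)

noncomputable def Ss (Mc : ℕ → ℝ) : ℕ → ℝ
  | 0 => 0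
  | k + 1 => max (5 * Ss Mc k + 1) (Rr Mc k)

noncomputable def σσ (Mc : ℕ → ℝ) (k : ℕ) : ℝ :=
  (k + 1) / (Ss Mc (k + 1) - Ss Mc k)

variable (Mc : ℕ → ℝ)

lemma Ss_zero : Ss Mc 0 = 0 := rfl

lemma le_Ss_succ (k : ℕ) : 5 * Ss Mc k + 1 ≤ Ss Mc (k + 1) := le_max_left _ _

lemma Rr_le_Ss_succ (k : ℕ) : Rr Mc k ≤ Ss Mc (k + 1) := le_max_right _ _

lemma Ss_nonneg (k : ℕ) : 0 ≤ Ss Mc k := by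
  induction k with
  | zero => simp [Ss_zero]
  | succ k ih => have := le_Ss_succ Mc k; linarith

lemma Ss_succ_ge (k : ℕ) : Ss Mc k + 1 ≤ Ss Mc (k + 1) := by
  have h1 := le_Ss_succ Mc k
  have h2 := Ss_nonneg Mc k
  linarith

lemma Ss_strictMono : StrictMono (Ss Mc) :=
  strictMono_nat_of_lt_succ fun k => by have := Ss_succ_ge Mc k; linarith

lemma Ss_mono : Monotone (Ss Mc) := (Ss_strictMono Mc).monotone

lemma nat_le_Ss (k : ℕ) : (k : ℝ) ≤ Ss Mc k := by
  induction k with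
  | zero => simp [Ss_zero]
  | succ k ih => have := Ss_succ_ge Mc k; push_cast; linarith

lemma dS_pos (k : ℕ) : 0 < Ss Mc (k + 1) - Ss Mc k := by
  have := Ss_succ_ge Mc k; linarith

lemma dS_growth (k : ℕ) : 4 * (Ss Mc (k + 1) - Ss Mc k) ≤ Ss Mc (k + 2) - Ss Mc (k + 1) := by
  have h1 := le_Ss_succ Mc (k + 1)
  have h2 := Ss_nonneg Mc k
  have h3 := Ss_nonneg Mc (k+1)
  linarith

lemma σσ_pos (k : ℕ) : 0 < σσ Mc k := by
  have := dS_pos Mc k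
  have : (0:ℝ) < (k+1 : ℝ) := by positivity
  exact div_pos this (dS_pos Mc k)

lemma σσ_mul_dS (k : ℕ) : σσ Mc k * (Ss Mc (k + 1) - Ss Mc k) = (k + 1 : ℝ) := by
  have := dS_pos Mc k
  rw [σσ, div_mul_cancel₀ _ this.ne']

lemma two_σσ_succ_le (k : ℕ) : 2 * σσ Mc (k + 1) ≤ σσ Mc k := by
  have h1 := dS_pos Mc k
  have h2 := dS_pos Mc (k+1)
  have h3 := dS_growth Mc k
  simp only [σσ]
  rw [mul_div_assoc', div_le_div_iff₀ h2 h1]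
  push_cast
  nlinarith

lemma σσ_succ_le (k : ℕ) : σσ Mc (k + 1) ≤ σσ Mc k := by
  have h := two_σσ_succ_le Mc k
  have h2 := σσ_pos Mc (k+1)
  linarith

lemma σσ_anti : Antitone (σσ Mc) :=
  antitone_nat_of_succ_le fun k => σσ_succ_le Mc k

/-- index of the interval containing `r`. -/
noncomputable def Kk (Mc : ℕ → ℝ) (r : ℝ) : ℕ := sInf {k | r < Ss Mc (k + 1)}

lemma Kk_set_nonempty (r : ℝ) : {k | r < Ss Mc (k + 1)}.Nonempty := by
  obtain ⟨n, hn⟩ := exists_nat_gt r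
  exact ⟨n, lt_of_lt_of_le hn (le_trans (nat_le_Ss Mc n) (Ss_mono Mc (Nat.le_succ n)))⟩

lemma lt_Ss_Kk_succ (r : ℝ) : r < Ss Mc (Kk Mc r + 1) :=
  Nat.sInf_mem (Kk_set_nonempty Mc r)

lemma Ss_Kk_le {r : ℝ} (hr : 0 ≤ r) : Ss Mc (Kk Mc r) ≤ r := by
  rcases h : Kk Mc r with _ | m
  · simpa [Ss_zero] using hr
  · by_contra hlt
    push_neg at hlt
    have hm : m ∈ {k | r < Ss Mc (k + 1)} := hlt
    have h2 : Kk Mc r ≤ m := Nat.sInf_le hm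
    omega

lemma Kk_mono {r s : ℝ} (h : r ≤ s) : Kk Mc r ≤ Kk Mc s := by
  apply Nat.sInf_le
  exact lt_of_le_of_lt h (lt_Ss_Kk_succ Mc s)

lemma Kk_Ss (k : ℕ) : Kk Mc (Ss Mc k) = k := by
  have h1 : Kk Mc (Ss Mc k) ≤ k := Nat.sInf_le (Ss_strictMono Mc (Nat.lt_succ_self k))
  rcases Nat.lt_or_ge (Kk Mc (Ss Mc k)) k with h | h
  · exfalso
    have h2 := lt_Ss_Kk_succ Mc (Ss Mc k)
    have : Ss Mc (Kk Mc (Ss Mc k) + 1) ≤ Ss Mc k := Ss_mono Mc (by omega)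
    linarith
  · omega

/-- the piecewise linear concave function. -/
noncomputable def φφ (Mc : ℕ → ℝ) (r : ℝ) : ℝ :=
  Vv (Kk Mc r) + σσ Mc (Kk Mc r) * (r - Ss Mc (Kk Mc r))

lemma φφ_Ss (k : ℕ) : φφ Mc (Ss Mc k) = Vv k := by
  simp [φφ, Kk_Ss]

/-- each line lies above later pieces (to the right). -/
lemma line_ge (k j : ℕ) (hkj : k ≤ j) {s : ℝ} (hs : Ss Mc j ≤ s) :
    Vv j + σσ Mc j * (s - Ss Mc j) ≤ Vv k + σσ Mc k * (s - Ss Mc k) := by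
  induction j with
  | zero =>
    have : k = 0 := Nat.le_zero.mp hkj
    subst this; exact le_rfl
  | succ j ih =>
    rcases Nat.eq_or_lt_of_le hkj with h | h
    · subst h; exact le_rfl
    · have hkj' : k ≤ j := by omega
      have hsj : Ss Mc j ≤ s := le_trans (Ss_mono Mc (Nat.le_succ j)) hs
      refine le_trans ?_ (ih hkj' hsj)
      have hV : Vv (j+1) = Vv j + σσ Mc j * (Ss Mc (j+1) - Ss Mc j) := by
        rw [σσ_mul_dS, Vv_succ]
      have hσ : σσ Mc (j+1) ≤ σσ Mc j := σσ_succ_le Mc j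
      have hs' : 0 ≤ s - Ss Mc (j+1) := by linarith
      nlinarith [mul_le_mul_of_nonneg_right hσ hs']

lemma φφ_nonneg {r : ℝ} (hr : 0 ≤ r) : 0 ≤ φφ Mc r := by
  have h1 := Vv_nonneg (Kk Mc r)
  have h2 := σσ_pos Mc (Kk Mc r)
  have h3 := Ss_Kk_le Mc hr
  simp only [φφ]
  nlinarith

lemma Vv_Kk_le_φφ {r : ℝ} (hr : 0 ≤ r) : Vv (Kk Mc r) ≤ φφ Mc r := by
  have h2 := σσ_pos Mc (Kk Mc r)
  have h3 := Ss_Kk_le Mc hr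
  simp only [φφ]
  nlinarith

lemma φφ_le_Vv_succ {r : ℝ} : φφ Mc r ≤ Vv (Kk Mc r + 1) := by
  have h2 := σσ_pos Mc (Kk Mc r)
  have h3 := lt_Ss_Kk_succ Mc r
  have hV : Vv (Kk Mc r + 1) = Vv (Kk Mc r) + σσ Mc (Kk Mc r) * (Ss Mc (Kk Mc r + 1) - Ss Mc (Kk Mc r)) := by
    rw [σσ_mul_dS, Vv_succ]
  simp only [φφ]
  nlinarith

lemma φφ_mono {r s : ℝ} (hr : 0 ≤ r) (hrs : r ≤ s) : φφ Mc r ≤ φφ Mc s := by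
  have hs : 0 ≤ s := le_trans hr hrs
  have hk : Kk Mc r ≤ Kk Mc s := Kk_mono Mc hrs
  rcases Nat.eq_or_lt_of_le hk with h | h
  · simp only [φφ, ← h]
    have := σσ_pos Mc (Kk Mc r)
    nlinarith
  · calc φφ Mc r ≤ Vv (Kk Mc r + 1) := φφ_le_Vv_succ Mc
      _ ≤ Vv (Kk Mc s) := Vv_mono h
      _ ≤ φφ Mc s := Vv_Kk_le_φφ Mc hs

/-- slope bound: going right from `r`, `φ` grows at most with slope `σ (K r)`. -/
lemma φφ_slope {r s : ℝ} (hr : 0 ≤ r) (hrs : r ≤ s) :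
    φφ Mc s ≤ φφ Mc r + σσ Mc (Kk Mc r) * (s - r) := by
  have hk : Kk Mc r ≤ Kk Mc s := Kk_mono Mc hrs
  have hsS : Ss Mc (Kk Mc s) ≤ s := Ss_Kk_le Mc (le_trans hr hrs)
  have := line_ge Mc (Kk Mc r) (Kk Mc s) hk hsS
  simp only [φφ]
  nlinarith

noncomputable def Ww (Mc : ℕ → ℝ) (k : ℕ) : ℝ := Vv k - σσ Mc k * Ss Mc k

lemma Ww_ge (k : ℕ) : Vv k / 2 ≤ Ww Mc k := by
  induction k with
  | zero => simp [Ww, Vv_zero, Ss_zero]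
  | succ k ih =>
    have h1 := two_σσ_succ_le Mc k
    have h2 := σσ_mul_dS Mc k
    have h3 := Ss_nonneg Mc (k+1)
    have h4 := Ss_nonneg Mc k
    have h5 := σσ_pos Mc k
    have h6 := σσ_pos Mc (k+1)
    have hW : Ww Mc (k+1) = Vv k + (k+1) - σσ Mc (k+1) * Ss Mc (k+1) := by
      rw [Ww, Vv_succ]
    have hWk : 0 ≤ Ww Mc k := le_trans (by have := Vv_nonneg k; linarith) ih
    have hσS : σσ Mc k * Ss Mc k ≤ Vv k := by simp only [Ww] at hWk; linarith
    have key : σσ Mc (k+1) * Ss Mc (k+1) ≤ (σσ Mc k / 2) * Ss Mc (k+1) := by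
      apply mul_le_mul_of_nonneg_right _ h3
      linarith
    have expand : (σσ Mc k / 2) * Ss Mc (k+1) = (σσ Mc k * (Ss Mc (k+1) - Ss Mc k)) / 2 + (σσ Mc k * Ss Mc k)/2 := by ring
    rw [hW, Vv_succ]
    rw [expand, h2] at key
    push_cast at key ⊢
    linarith

/-- the gain inequality. -/
lemma φφ_gain {a b t : ℝ} (ha : 0 ≤ a) (hab : a ≤ b) (ht : 0 ≤ t) (htab : t ≤ a + b) :
    φφ Mc t + Ww Mc (Kk Mc a) ≤ φφ Mc a + φφ Mc b := by
  have hb : 0 ≤ b := le_trans ha hab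
  have h1 : φφ Mc t ≤ φφ Mc (a + b) := φφ_mono Mc ht (by linarith)
  have h2 : φφ Mc (a+b) ≤ φφ Mc b + σσ Mc (Kk Mc b) * a := by
    have := φφ_slope Mc hb (by linarith : b ≤ a + b)
    calc φφ Mc (a+b) ≤ φφ Mc b + σσ Mc (Kk Mc b) * (a + b - b) := this
      _ = φφ Mc b + σσ Mc (Kk Mc b) * a := by ring_nf
  have h3 : σσ Mc (Kk Mc b) * a ≤ σσ Mc (Kk Mc a) * a :=
    mul_le_mul_of_nonneg_right (σσ_anti Mc (Kk_mono Mc hab)) ha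
  have h4 : φφ Mc a - σσ Mc (Kk Mc a) * a ≤ Ww Mc (Kk Mc a) → True := fun _ => trivial
  have h5 : φφ Mc a - σσ Mc (Kk Mc a) * a = Ww Mc (Kk Mc a) + σσ Mc (Kk Mc a) * (a - Ss Mc (Kk Mc a)) - σσ Mc (Kk Mc a) * (a - Ss Mc (Kk Mc a)) + (φφ Mc a - σσ Mc (Kk Mc a) * a - Ww Mc (Kk Mc a)) := by ring
  have h6 : φφ Mc a - σσ Mc (Kk Mc a) * a = Ww Mc (Kk Mc a) := by
    simp only [φφ, Ww]; ring
  linarith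

lemma one_le_Qq (hMc : ∀ n, 1 ≤ Mc n) (n k : ℕ) : 1 ≤ Qq Mc n k := by
  rw [Qq, ← Real.exp_zero]
  apply Real.exp_le_exp.mpr
  have h1 : 0 ≤ Real.log (Mc n) := Real.log_nonneg (hMc n)
  have h2 := Vv_nonneg (k+2)
  positivity

lemma one_le_Rr (hMc : ∀ n, 1 ≤ Mc n) (k : ℕ) : 1 ≤ Rr Mc k := by
  apply Finset.le_inf'
  intro n _
  exact one_le_Qq Mc hMc n k

lemma log_Rr_le (hMc : ∀ n, 1 ≤ Mc n) (k : ℕ) {n : ℕ} (hn : n ∈ Finset.Icc 1 (k+1)) :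
    Real.log (Rr Mc k) ≤ (Real.log (Mc n) + Vv (k + 2)) / n := by
  have h1 : Rr Mc k ≤ Qq Mc n k := Finset.inf'_le _ hn
  have h2 : 0 < Rr Mc k := lt_of_lt_of_le one_pos (one_le_Rr Mc hMc k)
  calc Real.log (Rr Mc k) ≤ Real.log (Qq Mc n k) := Real.log_le_log h2 h1
    _ = (Real.log (Mc n) + Vv (k + 2)) / n := Real.log_exp _

lemma log_Ss_arm (hMc : ∀ n, 1 ≤ Mc n) (k : ℕ) :
    Real.log (1 + Ss Mc (k+1)) ≤ Real.log 6 + Real.log (1 + Ss Mc k) ∨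
    Real.log (1 + Ss Mc (k+1)) ≤ Real.log 2 + Real.log (Rr Mc k) := by
  have hS := Ss_nonneg Mc k
  have hR := one_le_Rr Mc hMc k
  rcases max_choice (5 * Ss Mc k + 1) (Rr Mc k) with h | h
  · left
    have : (1:ℝ) + Ss Mc (k+1) ≤ 6 * (1 + Ss Mc k) := by rw [Ss, h]; linarith
    calc Real.log (1 + Ss Mc (k+1)) ≤ Real.log (6 * (1 + Ss Mc k)) := by
          apply Real.log_le_log (by have := Ss_nonneg Mc (k+1); linarith) this
      _ = Real.log 6 + Real.log (1 + Ss Mc k) := by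
          rw [Real.log_mul (by norm_num) (by positivity)]
  · right
    have : (1:ℝ) + Ss Mc (k+1) ≤ 2 * Rr Mc k := by rw [Ss, h]; linarith
    calc Real.log (1 + Ss Mc (k+1)) ≤ Real.log (2 * Rr Mc k) := by
          apply Real.log_le_log (by have := Ss_nonneg Mc (k+1); linarith) this
      _ = Real.log 2 + Real.log (Rr Mc k) := by
          rw [Real.log_mul (by norm_num) (by linarith)]

/-- Lemma A : logarithmic size of the break points relative to the values. -/
lemma logS_le_Vv (hMc : ∀ n, 1 ≤ Mc n) (α : ℕ) :
    ∃ C : ℝ, ∀ k, (α : ℝ) * Real.log (1 + Ss Mc (k+1)) ≤ Vv k + C := by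
  rcases Nat.eq_zero_or_pos α with hα | hα
  · exact ⟨0, fun k => by simp [hα, Vv_nonneg]⟩
  set k₀ : ℕ := 3 * α + 3 with hk₀
  set C₂ : ℝ := α * Real.log 2 + Real.log (Mc (3 * α)) / 3 with hC₂
  set C₀ : ℝ := (Finset.range (k₀+1)).sup' (by simp) (fun k => (α : ℝ) * Real.log (1 + Ss Mc (k+1)) - Vv k) with hC₀
  refine ⟨max C₀ C₂, fun k => ?_⟩
  induction k with
  | zero =>
    have : (α:ℝ) * Real.log (1 + Ss Mc 1) - Vv 0 ≤ C₀ :=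
      Finset.le_sup' (fun k => (α : ℝ) * Real.log (1 + Ss Mc (k+1)) - Vv k)
        (Finset.mem_range.mpr (show 0 < k₀ + 1 by omega))
    have h2 : C₀ ≤ max C₀ C₂ := le_max_left _ _
    linarith
  | succ m ih =>
    by_cases hm : m + 1 ≤ k₀
    · have : (α:ℝ) * Real.log (1 + Ss Mc (m+2)) - Vv (m+1) ≤ C₀ :=
        Finset.le_sup' (fun k => (α : ℝ) * Real.log (1 + Ss Mc (k+1)) - Vv k)
          (Finset.mem_range.mpr (by omega))
      have h2 : C₀ ≤ max C₀ C₂ := le_max_left _ _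
      linarith
    · push_neg at hm
      rcases log_Ss_arm Mc hMc (m+1) with h | h
      · -- geometric arm
        have hlog6 : Real.log 6 ≤ 2 := by
          rw [Real.log_le_iff_le_exp (by norm_num), show (2:ℝ) = 1 + 1 by norm_num,
            Real.exp_add]
          nlinarith [Real.exp_one_gt_d9]
        have hstep : (α:ℝ) * Real.log 6 ≤ (m:ℝ) + 1 := by
          have h2 : ((2*α : ℕ):ℝ) ≤ ((m+1 : ℕ):ℝ) := Nat.cast_le.mpr (by omega)
          push_cast at h2
          nlinarith [Nat.cast_nonneg (α := ℝ) α]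
        have hmul : (α:ℝ) * Real.log (1 + Ss Mc (m+2)) ≤
            (α:ℝ) * Real.log 6 + (α:ℝ) * Real.log (1 + Ss Mc (m+1)) := by
          have := mul_le_mul_of_nonneg_left h (Nat.cast_nonneg (α := ℝ) α)
          linarith [this]
        have hV : Vv (m+1) = Vv m + (m+1) := Vv_succ m
        push_cast at hV ⊢
        linarith [ih]
      · -- radius arm
        have hn : 3 * α ∈ Finset.Icc 1 (m+1+1) := by
          simp only [Finset.mem_Icc]
          omega
        have hlogR := log_Rr_le Mc hMc (m+1) hn
        have hα3 : (0:ℝ) < (3 * α : ℕ) := by positivity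
        have hmul : (α:ℝ) * Real.log (Rr Mc (m+1)) ≤
            (Real.log (Mc (3*α)) + Vv (m+3)) / 3 := by
          have := mul_le_mul_of_nonneg_left hlogR (Nat.cast_nonneg (α := ℝ) α)
          have heq : (α:ℝ) * ((Real.log (Mc (3*α)) + Vv (m + 1 + 2)) / (3*α : ℕ)) =
              (Real.log (Mc (3*α)) + Vv (m+3)) / 3 := by
            push_cast
            have hα' : (0:ℝ) < (α:ℝ) := by exact_mod_cast hα
            field_simp
          rw [heq] at this
          exact this
        have hVV : Vv (m+3) ≤ 3 * Vv (m+1) := by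
          have hm2 : (2:ℝ) ≤ (m:ℝ) := by exact_mod_cast (show 2 ≤ m by omega)
          simp only [Vv]
          push_cast
          nlinarith
        have hmul2 : (α:ℝ) * Real.log (1 + Ss Mc (m+2)) ≤
            (α:ℝ) * Real.log 2 + (α:ℝ) * Real.log (Rr Mc (m+1)) := by
          have := mul_le_mul_of_nonneg_left h (Nat.cast_nonneg (α := ℝ) α)
          linarith [this]
        have hC2 : C₂ ≤ max C₀ C₂ := le_max_right _ _
        simp only [hC₂] at hC2
        linarith

/-- summability weight bound : `(d+2)·log(1+a) ≤ W (K a) + C₁`. -/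
lemma gain_log_bound (hMc : ∀ n, 1 ≤ Mc n) (d : ℕ) :
    ∃ C₁ : ℝ, 0 ≤ C₁ ∧ ∀ a : ℝ, 0 ≤ a →
      ((d : ℝ) + 2) * Real.log (1 + a) ≤ Ww Mc (Kk Mc a) + C₁ := by
  obtain ⟨C, hC⟩ := logS_le_Vv Mc hMc (2 * (d + 2))
  refine ⟨max (C / 2) 0, le_max_right _ _, fun a ha => ?_⟩
  set k := Kk Mc a with hk
  have h1 : Real.log (1 + a) ≤ Real.log (1 + Ss Mc (k+1)) := by
    apply Real.log_le_log (by linarith)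
    have := lt_Ss_Kk_succ Mc a
    linarith [this]
  have h2 := hC k
  have h3 := Ww_ge Mc k
  have h4 : (0:ℝ) ≤ Real.log (1 + a) := Real.log_nonneg (by linarith)
  have h5 : ((2 * (d + 2) : ℕ) : ℝ) = 2 * ((d:ℝ) + 2) := by push_cast; ring
  rw [h5] at h2
  have h6 : 2 * ((d:ℝ) + 2) * Real.log (1 + a) ≤ Vv k + C := by
    calc 2 * ((d:ℝ) + 2) * Real.log (1 + a) ≤ 2 * ((d:ℝ) + 2) * Real.log (1 + Ss Mc (k+1)) := by
          apply mul_le_mul_of_nonneg_left h1 (by positivity)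
      _ ≤ Vv k + C := h2
  have h7 : C / 2 ≤ max (C / 2) 0 := le_max_left _ _
  linarith

/-- decay of `exp (-φ)` faster than any power. -/
lemma exp_neg_φφ_decay (hMc : ∀ n, 1 ≤ Mc n) (α : ℕ) :
    ∃ M : ℝ, 0 < M ∧ ∀ r : ℝ, 0 ≤ r → (1 + r) ^ α * Real.exp (-(φφ Mc r)) ≤ M := by
  obtain ⟨C, hC⟩ := logS_le_Vv Mc hMc α
  refine ⟨Real.exp C, Real.exp_pos C, fun r hr => ?_⟩
  have h1 : Real.log (1 + r) ≤ Real.log (1 + Ss Mc (Kk Mc r + 1)) := by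
    apply Real.log_le_log (by linarith)
    linarith [lt_Ss_Kk_succ Mc r]
  have h2 : (α:ℝ) * Real.log (1 + r) ≤ φφ Mc r + C := by
    calc (α:ℝ) * Real.log (1 + r) ≤ (α:ℝ) * Real.log (1 + Ss Mc (Kk Mc r + 1)) := by
          apply mul_le_mul_of_nonneg_left h1 (Nat.cast_nonneg α)
      _ ≤ Vv (Kk Mc r) + C := hC _
      _ ≤ φφ Mc r + C := by linarith [Vv_Kk_le_φφ Mc hr]
  have h3 : (1 + r) ^ α ≤ Real.exp (φφ Mc r + C) := by
    rw [← Real.log_le_iff_le_exp (by positivity)]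
    rw [Real.log_pow]
    exact h2
  calc (1 + r) ^ α * Real.exp (-(φφ Mc r)) ≤ Real.exp (φφ Mc r + C) * Real.exp (-(φφ Mc r)) := by
        apply mul_le_mul_of_nonneg_right h3 (le_of_lt (Real.exp_pos _))
    _ = Real.exp C := by rw [← Real.exp_add]; ring_nf

section WithF
variable (f : ℝ → ℝ)

lemma f_le_exp_of_ge_Rr (hMc : ∀ n, 1 ≤ Mc n)
    (hfnn : ∀ r, 0 ≤ r → 0 ≤ f r)
    (hfMc : ∀ n r, 0 ≤ r → (1 + r) ^ n * f r ≤ Mc n)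
    (k : ℕ) {r : ℝ} (hr : Rr Mc k ≤ r) : f r ≤ Real.exp (-(Vv (k+2))) := by
  obtain ⟨n, hn, hQ⟩ := Finset.exists_mem_eq_inf' (s := Finset.Icc 1 (k+1)) (by simp)
    (fun n => Qq Mc n k)
  have hn1 : 1 ≤ n := (Finset.mem_Icc.mp hn).1
  have hq1 : 1 ≤ Qq Mc n k := one_le_Qq Mc hMc n k
  have hr0 : (0:ℝ) ≤ r := by rw [Rr] at hr; linarith [hQ ▸ hr]
  have hr1 : Qq Mc n k ≤ r := hQ ▸ hr
  have hMcpos : (0:ℝ) < Mc n := lt_of_lt_of_le one_pos (hMc n)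
  have hqn : (Qq Mc n k) ^ n = Mc n * Real.exp (Vv (k+2)) := by
    rw [Qq, ← Real.exp_nat_mul]
    rw [mul_div_cancel₀ _ (by positivity : ((n:ℝ)) ≠ 0)]
    rw [Real.exp_add, Real.exp_log hMcpos]
  have hpow : Mc n * Real.exp (Vv (k+2)) ≤ (1 + r) ^ n := by
    rw [← hqn]
    apply pow_le_pow_left₀ (by linarith) (by linarith)
  have h1 := hfMc n r hr0
  have h2 : f r * (Mc n * Real.exp (Vv (k+2))) ≤ Mc n := by
    calc f r * (Mc n * Real.exp (Vv (k+2))) ≤ f r * (1 + r) ^ n := by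
          apply mul_le_mul_of_nonneg_left hpow (hfnn r hr0)
      _ = (1 + r) ^ n * f r := by ring
      _ ≤ Mc n := h1
  have h3 : f r * Real.exp (Vv (k+2)) ≤ 1 := by nlinarith [h2, hMcpos]
  have h4 := mul_le_mul_of_nonneg_right h3 (Real.exp_pos (-(Vv (k+2)))).le
  rw [one_mul] at h4
  calc f r = f r * Real.exp (Vv (k+2)) * Real.exp (-(Vv (k+2))) := by
        rw [Real.exp_neg, mul_assoc, mul_inv_cancel₀ (Real.exp_ne_zero _), mul_one]
    _ ≤ Real.exp (-(Vv (k+2))) := h4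

lemma f_le_g (hMc : ∀ n, 1 ≤ Mc n)
    (hfnn : ∀ r, 0 ≤ r → 0 ≤ f r)
    (hfanti : ∀ r s, 0 ≤ r → r ≤ s → f s ≤ f r)
    (hfMc : ∀ n r, 0 ≤ r → (1 + r) ^ n * f r ≤ Mc n) :
    ∀ r, 0 ≤ r → f r ≤ (Real.exp 1 * (1 + f 0)) * Real.exp (-(φφ Mc r)) := by
  intro r hr
  have hf00 : 0 ≤ f 0 := hfnn 0 le_rfl
  rcases h : Kk Mc r with _ | m
  · -- first interval
    have hφ : φφ Mc r ≤ 1 := by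
      have := φφ_le_Vv_succ Mc (r := r)
      rw [h] at this
      simpa [Vv] using this
    have h1 : f r ≤ f 0 := hfanti 0 r le_rfl hr
    have h2 : Real.exp (-(1:ℝ)) ≤ Real.exp (-(φφ Mc r)) := Real.exp_le_exp.mpr (by linarith)
    have h3 : Real.exp 1 * Real.exp (-(1:ℝ)) = 1 := by
      rw [← Real.exp_add]; simp
    have h4 : (1 + f 0) = Real.exp 1 * (1 + f 0) * Real.exp (-(1:ℝ)) := by
      rw [mul_comm (Real.exp 1) (1 + f 0), mul_assoc, h3, mul_one]
    have h5 : Real.exp 1 * (1 + f 0) * Real.exp (-(1:ℝ)) ≤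
        Real.exp 1 * (1 + f 0) * Real.exp (-(φφ Mc r)) :=
      mul_le_mul_of_nonneg_left h2 (by positivity)
    linarith
  · -- later intervals
    have hS : Ss Mc (m+1) ≤ r := by
      have := Ss_Kk_le Mc hr
      rwa [h] at this
    have hRr : Rr Mc m ≤ r := le_trans (Rr_le_Ss_succ Mc m) hS
    have h1 : f r ≤ Real.exp (-(Vv (m+2))) :=
      f_le_exp_of_ge_Rr Mc f hMc hfnn hfMc m hRr
    have hφ : φφ Mc r ≤ Vv (m+2) := by
      have := φφ_le_Vv_succ Mc (r := r)
      rwa [h] at this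
    have h2 : Real.exp (-(Vv (m+2))) ≤ Real.exp (-(φφ Mc r)) := Real.exp_le_exp.mpr (by linarith)
    have hB : 1 ≤ Real.exp 1 * (1 + f 0) := by
      nlinarith [Real.add_one_le_exp (1:ℝ), Real.exp_pos (1:ℝ)]
    calc f r ≤ Real.exp (-(φφ Mc r)) := le_trans h1 h2
      _ = 1 * Real.exp (-(φφ Mc r)) := (one_mul _).symm
      _ ≤ Real.exp 1 * (1 + f 0) * Real.exp (-(φφ Mc r)) := by
          apply mul_le_mul_of_nonneg_right hB (Real.exp_pos _).le

end WithF

section Counting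

open Metric MeasureTheory
open scoped ENNReal

variable {d : ℕ} {Λ : Set (EuclideanSpace ℝ (Fin d))} {ε : ℝ}

lemma counting (hε : 0 < ε)
    (h_disc : ∀ j ∈ Λ, ∀ k ∈ Λ, j ≠ k → ε ≤ dist j k) :
    ∀ (x : EuclideanSpace ℝ (Fin d)) (n : ℕ) (F : Finset (EuclideanSpace ℝ (Fin d))),
      ↑F ⊆ Λ → (∀ l ∈ F, dist x l < n + 1) →
      (F.card : ℝ) ≤ (2 * (1 + ε) / ε) ^ d * (n + 2) ^ d := by
  intro x n F hFΛ hFn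
  set μ1 := volume (ball (0 : EuclideanSpace ℝ (Fin d)) 1) with hμ1
  have hμ1ne : μ1 ≠ 0 := (measure_ball_pos _ _ one_pos).ne'
  have hμ1top : μ1 ≠ ⊤ := measure_ball_lt_top.ne
  have hε2 : (0:ℝ) < ε / 2 := by linarith
  have hdisj : (↑F : Set (EuclideanSpace ℝ (Fin d))).PairwiseDisjoint
      (fun l => ball l (ε / 2)) := by
    intro l hl l' hl' hne
    apply ball_disjoint_ball
    have := h_disc l (hFΛ hl) l' (hFΛ hl') hne
    linarith
  have hvol : ∀ l : EuclideanSpace ℝ (Fin d),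
      volume (ball l (ε/2)) = ENNReal.ofReal ((ε/2) ^ d) * μ1 := fun l => by
    rw [Measure.addHaar_ball_of_pos volume l hε2, finrank_euclideanSpace_fin]
  have hunion : (F.card : ℝ≥0∞) * (ENNReal.ofReal ((ε/2) ^ d) * μ1) =
      volume (⋃ l ∈ F, ball l (ε/2)) := by
    rw [measure_biUnion_finset hdisj (fun l _ => measurableSet_ball)]
    simp only [hvol, Finset.sum_const, nsmul_eq_mul]
  have hsub : (⋃ l ∈ F, ball l (ε/2)) ⊆ ball x ((n + 1) + ε/2) := by
    intro y hy
    simp only [Set.mem_iUnion] at hy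
    obtain ⟨l, hl, hyl⟩ := hy
    have h1 : dist y l < ε/2 := mem_ball.mp hyl
    have h2 := hFn l hl
    have : dist y x ≤ dist y l + dist l x := dist_triangle y l x
    rw [mem_ball]
    rw [dist_comm] at h2
    linarith
  have hballbig : volume (ball x ((n + 1) + ε/2)) =
      ENNReal.ofReal (((n+1) + ε/2) ^ d) * μ1 := by
    rw [Measure.addHaar_ball_of_pos volume x (by positivity), finrank_euclideanSpace_fin]
  have hchain : (F.card : ℝ≥0∞) * (ENNReal.ofReal ((ε/2) ^ d) * μ1) ≤
      ENNReal.ofReal (((n+1) + ε/2) ^ d) * μ1 := by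
    rw [hunion, ← hballbig]
    exact measure_mono hsub
  -- compare the two real radii
  have hbase : ((n:ℝ)+1) + ε/2 ≤ (2 * (1 + ε) / ε) * ((n:ℝ) + 2) * (ε/2) := by
    have h1 : (2 * (1 + ε) / ε) * ((n:ℝ) + 2) * (ε/2) = (1 + ε) * ((n:ℝ) + 2) := by
      field_simp
    rw [h1]
    nlinarith [Nat.cast_nonneg (α := ℝ) n]
  have hpow : (((n:ℝ)+1) + ε/2) ^ d ≤ ((2 * (1 + ε) / ε) ^ d * ((n:ℝ) + 2) ^ d) * (ε/2) ^ d := by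
    have h2 : ((2 * (1 + ε) / ε) ^ d * ((n:ℝ) + 2) ^ d) * (ε/2) ^ d =
        ((2 * (1 + ε) / ε) * ((n:ℝ) + 2) * (ε/2)) ^ d := by rw [mul_pow, mul_pow]
    rw [h2]
    exact pow_le_pow_left₀ (by positivity) hbase d
  have hchain2 : (F.card : ℝ≥0∞) * (ENNReal.ofReal ((ε/2) ^ d) * μ1) ≤
      ENNReal.ofReal ((2 * (1 + ε) / ε) ^ d * ((n:ℝ) + 2) ^ d) *
        (ENNReal.ofReal ((ε/2) ^ d) * μ1) := by
    refine le_trans hchain ?_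
    rw [← mul_assoc, ← ENNReal.ofReal_mul (by positivity)]
    apply mul_le_mul_left (ENNReal.ofReal_le_ofReal ?_)
    exact_mod_cast hpow
  have hBne : ENNReal.ofReal ((ε/2) ^ d) * μ1 ≠ 0 := by
    apply mul_ne_zero _ hμ1ne
    simp only [ne_eq, ENNReal.ofReal_eq_zero, not_le]
    positivity
  have hBtop : ENNReal.ofReal ((ε/2) ^ d) * μ1 ≠ ⊤ :=
    ENNReal.mul_ne_top ENNReal.ofReal_ne_top hμ1top
  have hfinal : (F.card : ℝ≥0∞) ≤
      ENNReal.ofReal ((2 * (1 + ε) / ε) ^ d * ((n:ℝ) + 2) ^ d) :=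
    (ENNReal.mul_le_mul_iff_left hBne hBtop).mp hchain2
  rw [← ENNReal.ofReal_natCast] at hfinal
  have := (ENNReal.ofReal_le_ofReal_iff (by positivity)).mp hfinal
  push_cast at this ⊢
  exact this

lemma sum_inv_sq (N : ℕ) : ∑ m ∈ Finset.range N, (((1:ℝ) + m) ^ 2)⁻¹ ≤ 2 := by
  have key : ∀ N : ℕ, ∑ m ∈ Finset.range N, (((1:ℝ) + m) ^ 2)⁻¹ ≤ 2 - 2 / (N + 1) := by
    intro N
    induction N with
    | zero => norm_num
    | succ N ih =>
      rw [Finset.sum_range_succ]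
      have hN : (0:ℝ) < (N:ℝ) + 1 := by positivity
      have hN2 : (0:ℝ) < (N:ℝ) + 2 := by positivity
      have step : (((1:ℝ) + N) ^ 2)⁻¹ + 2 / ((N:ℝ) + 2) ≤ 2 / ((N:ℝ) + 1) := by
        rw [inv_eq_one_div, div_add_div _ _ (by positivity) (by positivity),
          div_le_div_iff₀ (by positivity) hN]
        ring_nf
        nlinarith [Nat.cast_nonneg (α := ℝ) N]
      push_cast
      have e2 : 2 - 2/((N:ℝ)+1+1) = 2 - 2/((N:ℝ)+2) := by ring_nf
      rw [e2]
      linarith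
  have h1 := key N
  have h2 : (0:ℝ) < 2 / ((N:ℝ) + 1) := by positivity
  linarith

lemma weight_sum (hε : 0 < ε)
    (h_disc : ∀ j ∈ Λ, ∀ k ∈ Λ, j ≠ k → ε ≤ dist j k) :
    ∀ (x : EuclideanSpace ℝ (Fin d)) (F : Finset (EuclideanSpace ℝ (Fin d))), ↑F ⊆ Λ →
      ∑ l ∈ F, ((1 + dist x l) ^ (d + 2))⁻¹ ≤ (2 * (1 + ε) / ε) ^ d * 2 ^ d * 2 := by
  intro x F hFΛ
  set A := (2 * (1 + ε) / ε) ^ d with hA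
  have hApos : (0:ℝ) < A := by positivity
  set N := (F.sup fun l => ⌊dist x l⌋₊) + 1 with hN
  have hmap : ∀ l ∈ F, ⌊dist x l⌋₊ ∈ Finset.range N := by
    intro l hl
    simp only [Finset.mem_range, hN]
    exact Nat.lt_succ_of_le (Finset.le_sup (f := fun l => ⌊dist x l⌋₊) hl)
  rw [← Finset.sum_fiberwise_of_maps_to hmap (fun l => ((1 + dist x l) ^ (d + 2))⁻¹)]
  have inner : ∀ m ∈ Finset.range N,
      ∑ l ∈ F.filter (fun l => ⌊dist x l⌋₊ = m), ((1 + dist x l) ^ (d + 2))⁻¹ ≤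
        A * 2 ^ d * (((1:ℝ) + m) ^ 2)⁻¹ := by
    intro m _
    set Fm := F.filter (fun l => ⌊dist x l⌋₊ = m) with hFm
    have hcard : (Fm.card : ℝ) ≤ A * ((m:ℝ) + 2) ^ d := by
      apply counting hε h_disc x m Fm (le_trans (Finset.filter_subset _ F) hFΛ)
      intro l hl
      have : ⌊dist x l⌋₊ = m := (Finset.mem_filter.mp hl).2
      have h2 := Nat.lt_floor_add_one (dist x l)
      rw [this] at h2
      push_cast at h2 ⊢
      linarith
    have hterm : ∀ l ∈ Fm, ((1 + dist x l) ^ (d + 2))⁻¹ ≤ (((1:ℝ) + m) ^ (d + 2))⁻¹ := by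
      intro l hl
      have : ⌊dist x l⌋₊ = m := (Finset.mem_filter.mp hl).2
      have h2 : (m : ℝ) ≤ dist x l := by
        rw [← this]
        exact Nat.floor_le dist_nonneg
      apply inv_anti₀ (by positivity)
      apply pow_le_pow_left₀ (by positivity) (by linarith)
    calc ∑ l ∈ Fm, ((1 + dist x l) ^ (d + 2))⁻¹ ≤
        ∑ _l ∈ Fm, (((1:ℝ) + m) ^ (d + 2))⁻¹ := Finset.sum_le_sum hterm
      _ = (Fm.card : ℝ) * (((1:ℝ) + m) ^ (d + 2))⁻¹ := by
          rw [Finset.sum_const, nsmul_eq_mul]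
      _ ≤ A * ((m:ℝ) + 2) ^ d * (((1:ℝ) + m) ^ (d + 2))⁻¹ := by
          apply mul_le_mul_of_nonneg_right hcard (by positivity)
      _ ≤ A * 2 ^ d * (((1:ℝ) + m) ^ 2)⁻¹ := by
          have hsplit : ((1:ℝ) + m) ^ (d + 2) = ((1:ℝ) + m) ^ d * ((1:ℝ) + m) ^ 2 :=
            pow_add _ d 2
          have hb : ((m:ℝ) + 2) ^ d ≤ 2 ^ d * ((1:ℝ) + m) ^ d := by
            rw [← mul_pow]
            apply pow_le_pow_left₀ (by positivity) (by linarith)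
          rw [hsplit, mul_inv]
          calc A * ((m:ℝ) + 2) ^ d * ((((1:ℝ) + m) ^ d)⁻¹ * (((1:ℝ) + m) ^ 2)⁻¹) ≤
              A * (2 ^ d * ((1:ℝ) + m) ^ d) * ((((1:ℝ) + m) ^ d)⁻¹ * (((1:ℝ) + m) ^ 2)⁻¹) := by
                apply mul_le_mul_of_nonneg_right _ (by positivity)
                apply mul_le_mul_of_nonneg_left hb (le_of_lt hApos)
            _ = A * 2 ^ d * (((1:ℝ) + m) ^ d * (((1:ℝ) + m) ^ d)⁻¹) * (((1:ℝ) + m) ^ 2)⁻¹ := by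
                ring
            _ = A * 2 ^ d * (((1:ℝ) + m) ^ 2)⁻¹ := by
                rw [mul_inv_cancel₀ (by positivity)]
                ring
  calc ∑ m ∈ Finset.range N, ∑ l ∈ F.filter (fun l => ⌊dist x l⌋₊ = m),
        ((1 + dist x l) ^ (d + 2))⁻¹ ≤
      ∑ m ∈ Finset.range N, A * 2 ^ d * (((1:ℝ) + m) ^ 2)⁻¹ := Finset.sum_le_sum inner
    _ = A * 2 ^ d * ∑ m ∈ Finset.range N, (((1:ℝ) + m) ^ 2)⁻¹ := by
        rw [Finset.mul_sum]
    _ ≤ A * 2 ^ d * 2 := by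
        apply mul_le_mul_of_nonneg_left (sum_inv_sq N) (by positivity)

end Counting

end Stmt4Aux


/-- Every monotonically decreasing non-negative function decaying faster than any power
can be upper-bounded by one which in addition is reproducing for a given uniformly
discrete set `Λ ⊂ ℝ^d`. -/
theorem stmt_4 (d : ℕ) (Λ : Set (EuclideanSpace ℝ (Fin d))) (ε : ℝ) (hε : 0 < ε)
    (h_disc : ∀ j ∈ Λ, ∀ k ∈ Λ, j ≠ k → ε ≤ dist j k)
    (f : ℝ → ℝ)
    (hf_nonneg : ∀ r, 0 ≤ r → 0 ≤ f r)
    (hf_anti : ∀ r s, 0 ≤ r → r ≤ s → f s ≤ f r)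
    (hf_decay : ∀ α : ℕ, ∃ M : ℝ, ∀ r, 0 ≤ r → (1 + r) ^ α * f r ≤ M) :
    ∃ g : ℝ → ℝ,
      (∀ r, 0 ≤ r → 0 ≤ g r) ∧
      (∀ r s, 0 ≤ r → r ≤ s → g s ≤ g r) ∧
      (∀ α : ℕ, ∃ M : ℝ, ∀ r, 0 ≤ r → (1 + r) ^ α * g r ≤ M) ∧
      (∀ r, 0 ≤ r → f r ≤ g r) ∧
      ∃ C : ℝ, 0 < C ∧ ∀ j ∈ Λ, ∀ k ∈ Λ,
        (∑' l : Λ, g (dist j (l : EuclideanSpace ℝ (Fin d))) *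
            g (dist (l : EuclideanSpace ℝ (Fin d)) k))
          ≤ C * g (dist j k) := by
  classical
  set Mc : ℕ → ℝ := fun n => max (Classical.choose (hf_decay n)) 1 with hMcdef
  have hMc1 : ∀ n, 1 ≤ Mc n := fun n => le_max_right _ _
  have hfMc : ∀ n r, 0 ≤ r → (1 + r) ^ n * f r ≤ Mc n := fun n r hr =>
    le_trans (Classical.choose_spec (hf_decay n) r hr) (le_max_left _ _)
  have hf00 : 0 ≤ f 0 := hf_nonneg 0 le_rfl
  set B : ℝ := Real.exp 1 * (1 + f 0) with hB
  have hBpos : 0 < B := by positivity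
  set g : ℝ → ℝ := fun r => B * Real.exp (-(Stmt4Aux.φφ Mc r)) with hg
  have hgnn : ∀ r, 0 ≤ g r := fun r => by
    simp only [hg]; positivity
  refine ⟨g, fun r _ => hgnn r, ?_, ?_, ?_, ?_⟩
  · intro r s hr hrs
    simp only [hg]
    exact mul_le_mul_of_nonneg_left
      (Real.exp_le_exp.mpr (neg_le_neg (Stmt4Aux.φφ_mono Mc hr hrs))) hBpos.le
  · intro α
    obtain ⟨M, hMpos, hM⟩ := Stmt4Aux.exp_neg_φφ_decay Mc hMc1 α
    refine ⟨B * M, fun r hr => ?_⟩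
    simp only [hg]
    calc (1+r)^α * (B * Real.exp (-(Stmt4Aux.φφ Mc r)))
        = B * ((1+r)^α * Real.exp (-(Stmt4Aux.φφ Mc r))) := by ring
      _ ≤ B * M := mul_le_mul_of_nonneg_left (hM r hr) hBpos.le
  · intro r hr
    simpa [hg, hB] using Stmt4Aux.f_le_g Mc f hMc1 hf_nonneg hf_anti hfMc r hr
  · obtain ⟨C₁, hC₁0, hC₁⟩ := Stmt4Aux.gain_log_bound Mc hMc1 d
    set A2 : ℝ := (2 * (1 + ε) / ε) ^ d * 2 ^ d * 2 with hA2
    have hA2pos : 0 < A2 := by positivity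
    set C : ℝ := B * Real.exp C₁ * (2 * A2) with hC
    have hCpos : 0 < C := by positivity
    refine ⟨C, hCpos, ?_⟩
    intro j hj k hk
    set t := dist j k with ht
    have ht0 : 0 ≤ t := dist_nonneg
    have hgt0 : 0 ≤ g t := hgnn t
    -- ordered pointwise bound
    have key2 : ∀ a b : ℝ, 0 ≤ a → a ≤ b → t ≤ a + b →
        g a * g b ≤ B * Real.exp C₁ * g t *
          (((1 + a) ^ (d+2))⁻¹ + ((1 + b) ^ (d+2))⁻¹) := by
      intro a b ha hab htab
      have hb : 0 ≤ b := le_trans ha hab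
      have hgain := Stmt4Aux.φφ_gain Mc ha hab ht0 htab
      have h2 := hC₁ a ha
      have hexp1 : Real.exp (((d:ℝ)+2) * Real.log (1+a)) = (1+a)^(d+2) := by
        have : Real.log ((1+a)^(d+2)) = ((d:ℝ)+2) * Real.log (1+a) := by
          rw [Real.log_pow]; push_cast; ring
        rw [← this, Real.exp_log (by positivity)]
      have h3 : Real.exp (-(Stmt4Aux.Ww Mc (Stmt4Aux.Kk Mc a))) ≤
          Real.exp C₁ * ((1 + a) ^ (d+2))⁻¹ := by
        have hstep : -(Stmt4Aux.Ww Mc (Stmt4Aux.Kk Mc a)) ≤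
            C₁ - ((d:ℝ)+2) * Real.log (1+a) := by linarith
        calc Real.exp (-(Stmt4Aux.Ww Mc (Stmt4Aux.Kk Mc a)))
            ≤ Real.exp (C₁ - ((d:ℝ)+2) * Real.log (1+a)) := Real.exp_le_exp.mpr hstep
          _ = Real.exp C₁ * (Real.exp (((d:ℝ)+2) * Real.log (1+a)))⁻¹ := by
              rw [Real.exp_sub, div_eq_mul_inv]
          _ = Real.exp C₁ * ((1 + a) ^ (d+2))⁻¹ := by rw [hexp1]
      have h4 : Real.exp (-(Stmt4Aux.φφ Mc a)) * Real.exp (-(Stmt4Aux.φφ Mc b)) ≤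
          Real.exp (-(Stmt4Aux.φφ Mc t)) * Real.exp (-(Stmt4Aux.Ww Mc (Stmt4Aux.Kk Mc a))) := by
        rw [← Real.exp_add, ← Real.exp_add]
        exact Real.exp_le_exp.mpr (by linarith)
      have h5 : Real.exp (-(Stmt4Aux.φφ Mc t)) *
          Real.exp (-(Stmt4Aux.Ww Mc (Stmt4Aux.Kk Mc a))) ≤
          Real.exp (-(Stmt4Aux.φφ Mc t)) * (Real.exp C₁ * ((1 + a) ^ (d+2))⁻¹) :=
        mul_le_mul_of_nonneg_left h3 (Real.exp_pos _).le
      simp only [hg]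
      have hbterm : (0:ℝ) ≤ ((1 + b) ^ (d+2))⁻¹ := by positivity
      have hexpt : (0:ℝ) < Real.exp (-(Stmt4Aux.φφ Mc t)) := Real.exp_pos _
      have hrearr : B * Real.exp (-(Stmt4Aux.φφ Mc a)) * (B * Real.exp (-(Stmt4Aux.φφ Mc b))) =
          B * B * (Real.exp (-(Stmt4Aux.φφ Mc a)) * Real.exp (-(Stmt4Aux.φφ Mc b))) := by ring
      rw [hrearr]
      have hmain : B * B * (Real.exp (-(Stmt4Aux.φφ Mc a)) * Real.exp (-(Stmt4Aux.φφ Mc b))) ≤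
          B * B * (Real.exp (-(Stmt4Aux.φφ Mc t)) * (Real.exp C₁ * ((1 + a) ^ (d+2))⁻¹)) := by
        apply mul_le_mul_of_nonneg_left (le_trans h4 h5) (by positivity)
      refine le_trans hmain ?_
      have hBexp : (0:ℝ) ≤ B * Real.exp C₁ * (B * Real.exp (-(Stmt4Aux.φφ Mc t))) := by positivity
      calc B * B * (Real.exp (-(Stmt4Aux.φφ Mc t)) * (Real.exp C₁ * ((1 + a) ^ (d+2))⁻¹))
          = B * Real.exp C₁ * (B * Real.exp (-(Stmt4Aux.φφ Mc t))) * ((1 + a) ^ (d+2))⁻¹ := by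
            ring
        _ ≤ B * Real.exp C₁ * (B * Real.exp (-(Stmt4Aux.φφ Mc t))) *
            (((1 + a) ^ (d+2))⁻¹ + ((1 + b) ^ (d+2))⁻¹) := by
            apply mul_le_mul_of_nonneg_left _ hBexp
            linarith
        _ = B * Real.exp C₁ * (B * Real.exp (-(Stmt4Aux.φφ Mc t))) *
            (((1 + a) ^ (d+2))⁻¹ + ((1 + b) ^ (d+2))⁻¹) := rfl
    have key : ∀ a b : ℝ, 0 ≤ a → 0 ≤ b → t ≤ a + b →
        g a * g b ≤ B * Real.exp C₁ * g t *
          (((1 + a) ^ (d+2))⁻¹ + ((1 + b) ^ (d+2))⁻¹) := by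
      intro a b ha hb htab
      rcases le_total a b with h | h
      · exact key2 a b ha h htab
      · have := key2 b a hb h (by linarith)
        calc g a * g b = g b * g a := by ring
          _ ≤ B * Real.exp C₁ * g t * (((1 + b) ^ (d+2))⁻¹ + ((1 + a) ^ (d+2))⁻¹) := this
          _ = B * Real.exp C₁ * g t * (((1 + a) ^ (d+2))⁻¹ + ((1 + b) ^ (d+2))⁻¹) := by ring
    -- finite sums
    have hsum : ∀ s : Finset Λ,
        ∑ l ∈ s, g (dist j (l : EuclideanSpace ℝ (Fin d))) *
          g (dist (l : EuclideanSpace ℝ (Fin d)) k) ≤ C * g t := by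
      intro s
      set F := s.image (Subtype.val) with hF
      have hFΛ : ↑F ⊆ Λ := by
        intro y hy
        simp only [hF, Finset.coe_image, Set.mem_image] at hy
        obtain ⟨a, _, rfl⟩ := hy
        exact a.2
      have hsum_eq : ∑ l ∈ s, g (dist j (l : EuclideanSpace ℝ (Fin d))) *
          g (dist (l : EuclideanSpace ℝ (Fin d)) k) =
          ∑ y ∈ F, g (dist j y) * g (dist y k) := by
        rw [hF, Finset.sum_image (fun a _ b _ h => Subtype.val_injective h)]
      rw [hsum_eq]
      have hterm : ∀ y ∈ F, g (dist j y) * g (dist y k) ≤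
          B * Real.exp C₁ * g t *
            (((1 + dist j y) ^ (d+2))⁻¹ + ((1 + dist k y) ^ (d+2))⁻¹) := by
        intro y _
        have h := key (dist j y) (dist y k) dist_nonneg dist_nonneg (dist_triangle j y k)
        rw [dist_comm k y]
        exact h
      calc ∑ y ∈ F, g (dist j y) * g (dist y k)
          ≤ ∑ y ∈ F, B * Real.exp C₁ * g t *
            (((1 + dist j y) ^ (d+2))⁻¹ + ((1 + dist k y) ^ (d+2))⁻¹) :=
            Finset.sum_le_sum hterm
        _ = B * Real.exp C₁ * g t *
            ((∑ y ∈ F, ((1 + dist j y) ^ (d+2))⁻¹) +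
              (∑ y ∈ F, ((1 + dist k y) ^ (d+2))⁻¹)) := by
            rw [← Finset.mul_sum, Finset.sum_add_distrib]
        _ ≤ B * Real.exp C₁ * g t * (A2 + A2) := by
            apply mul_le_mul_of_nonneg_left _ (by positivity)
            exact add_le_add (Stmt4Aux.weight_sum hε h_disc j F hFΛ)
              (Stmt4Aux.weight_sum hε h_disc k F hFΛ)
        _ = C * g t := by rw [hC]; ring
    by_cases hS : Summable (fun l : Λ => g (dist j (l : EuclideanSpace ℝ (Fin d))) *
        g (dist (l : EuclideanSpace ℝ (Fin d)) k))
    · exact Summable.tsum_le_of_sum_le hS hsum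
    · rw [tsum_eq_zero_of_not_summable hS]
      exact mul_nonneg hCpos.le hgt0
end

section
/- Let A be an observable in a quasi-local algebra, and j, k two sites with localization estimates f_j(A, r) ≤ ε₁ and f_k(A, r) ≤ ε₂, where f_x(A,r) is the distance in norm from A to the subalgebra supported on the ball B_x(r). Let B be a best possible approximation of A in the subalgebra supported on B_j(r) ∩ B_k(r) (i.e., ‖A − B‖ = f_{B_j(r)∩B_k(r)}(A)). Then ‖A − B‖ ≤ ε₁ + ε₂ + min(ε₁, ε₂). -/
/-!
Let `P` be the expectation onto the `B_j(r)`-algebra. It fixes any `b₁` localized in `B_j(r)`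
and, being non-expanding, moves any `b₂` localized in `B_k(r)` into the algebra of the
intersection with `‖b₁ - P b₂‖ ≤ ‖b₁ - b₂‖ ≤ ‖b₁ - a‖ + ‖a - b₂‖`. Hence the best approximation
on the intersection is within `2 ε₁ + ε₂` of `a`, and symmetrically within `ε₁ + 2 ε₂`.
-/

open Metric

theorem sInf_image_norm_sub_eq_infDist {E : Type*} [SeminormedAddCommGroup E] (a : E)
    (s : Set E) : sInf ((fun b => ‖a - b‖) '' s) = infDist a s := by
  simp only [sInf_image', infDist_eq_iInf, dist_eq_norm]

section Nonexpanding

variable {α : Type*} [PseudoMetricSpace α] {P : α → α}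

theorem dist_apply_le_of_isFixedPt (hP : LipschitzWith 1 P) {b₁ : α}
    (hb₁ : Function.IsFixedPt P b₁) (a b₂ : α) :
    dist a (P b₂) ≤ 2 * dist a b₁ + dist a b₂ := by
  have hmove : dist b₁ (P b₂) ≤ dist b₁ b₂ := by
    simpa [hb₁.eq] using hP.dist_le_mul b₁ b₂
  calc dist a (P b₂) ≤ dist a b₁ + dist b₁ (P b₂) := dist_triangle _ _ _
    _ ≤ dist a b₁ + (dist b₁ a + dist a b₂) := by
        gcongr; exact hmove.trans (dist_triangle _ _ _)
    _ = 2 * dist a b₁ + dist a b₂ := by rw [dist_comm b₁ a]; ring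

theorem infDist_le_two_mul_infDist_add_infDist (hP : LipschitzWith 1 P) {s₁ s₂ t : Set α}
    (hs₁ : s₁.Nonempty) (hs₂ : s₂.Nonempty) (hfix : ∀ b ∈ s₁, Function.IsFixedPt P b)
    (hmaps : Set.MapsTo P s₂ t) (a : α) :
    infDist a t ≤ 2 * infDist a s₁ + infDist a s₂ := by
  refine le_of_forall_pos_lt_add fun ε hε => ?_
  have hε3 : 0 < ε / 3 := by positivity
  obtain ⟨b₁, hb₁, hab₁⟩ := (infDist_lt_iff hs₁).1 (lt_add_of_pos_right (infDist a s₁) hε3)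
  obtain ⟨b₂, hb₂, hab₂⟩ := (infDist_lt_iff hs₂).1 (lt_add_of_pos_right (infDist a s₂) hε3)
  calc infDist a t ≤ dist a (P b₂) := infDist_le_dist_of_mem (hmaps hb₂)
    _ ≤ 2 * dist a b₁ + dist a b₂ := dist_apply_le_of_isFixedPt hP (hfix b₁ hb₁) a b₂
    _ < 2 * infDist a s₁ + infDist a s₂ + ε := by linarith

end Nonexpanding

theorem stmt_10_general {d : ℕ} {A : Type*} [NormedRing A]
    (S : Set (EuclideanSpace ℝ (Fin d)) → Set A)
    (hS_ne : ∀ X, (S X).Nonempty)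
    (E : Set (EuclideanSpace ℝ (Fin d)) → A → A)
    (hE_fix : ∀ X a, a ∈ S X → E X a = a)
    (hE_contr : ∀ X a b, ‖E X a - E X b‖ ≤ ‖a - b‖)
    (hE_loc : ∀ X Y a, a ∈ S Y → E X a ∈ S (X ∩ Y))
    (fApprox : Set (EuclideanSpace ℝ (Fin d)) → A → ℝ)
    (hf : ∀ X a, fApprox X a = sInf ((fun b => ‖a - b‖) '' S X))
    (j k : EuclideanSpace ℝ (Fin d)) (r : ℝ) (a b : A) (ε₁ ε₂ : ℝ)
    (h1 : fApprox (Metric.ball j r) a ≤ ε₁)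
    (h2 : fApprox (Metric.ball k r) a ≤ ε₂)
    (hb_best : ‖a - b‖ = fApprox (Metric.ball j r ∩ Metric.ball k r) a) :
    ‖a - b‖ ≤ ε₁ + ε₂ + min ε₁ ε₂ := by
  have hf_eq : ∀ X, fApprox X a = infDist a (S X) := fun X =>
    (hf X a).trans (sInf_image_norm_sub_eq_infDist a (S X))
  have hE_lip : ∀ X, LipschitzWith 1 (E X) := fun X =>
    LipschitzWith.of_dist_le_mul fun x y => by simpa [dist_eq_norm] using hE_contr X x y
  have hj := infDist_le_two_mul_infDist_add_infDist (hE_lip (ball j r)) (hS_ne _) (hS_ne _)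
    (fun c hc => hE_fix _ c hc) (fun c hc => hE_loc _ (ball k r) c hc) a
  have hk : infDist a (S (ball j r ∩ ball k r)) ≤
      2 * infDist a (S (ball k r)) + infDist a (S (ball j r)) :=
    infDist_le_two_mul_infDist_add_infDist (hE_lip (ball k r)) (hS_ne _) (hS_ne _)
      (fun c hc => hE_fix _ c hc) (fun c hc => by rw [Set.inter_comm]; exact hE_loc _ _ c hc) a
  rw [hf_eq] at h1 h2 hb_best
  rw [hb_best, add_min]
  exact le_min (by linarith) (by linarith)

/-- If `a` is `ε₁`-approximated on the ball `B_j(r)` and `ε₂`-approximated on `B_k(r)`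
(in the sense of the localization seminorms `f X a = inf_{b ∈ S X} ‖a - b‖`), and `b` is
a best possible approximation of `a` in the subalgebra of the intersection
`B_j(r) ∩ B_k(r)`, then `‖a - b‖ ≤ ε₁ + ε₂ + min ε₁ ε₂`.  Here `S X` are the local
subalgebras and `E X` the norm-non-increasing conditional expectations onto them. -/
theorem stmt_10 {d : ℕ} {A : Type*} [NormedRing A]
    (S : Set (EuclideanSpace ℝ (Fin d)) → Set A)
    (hS_mono : ∀ X Y : Set (EuclideanSpace ℝ (Fin d)), X ⊆ Y → S X ⊆ S Y)
    (hS_ne : ∀ X, (S X).Nonempty)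
    (E : Set (EuclideanSpace ℝ (Fin d)) → A → A)
    (hE_mem : ∀ X a, E X a ∈ S X)
    (hE_fix : ∀ X a, a ∈ S X → E X a = a)
    (hE_contr : ∀ X a b, ‖E X a - E X b‖ ≤ ‖a - b‖)
    (hE_loc : ∀ X Y a, a ∈ S Y → E X a ∈ S (X ∩ Y))
    (fApprox : Set (EuclideanSpace ℝ (Fin d)) → A → ℝ)
    (hf : ∀ X a, fApprox X a = sInf ((fun b => ‖a - b‖) '' S X))
    (j k : EuclideanSpace ℝ (Fin d)) (r : ℝ) (a b : A) (ε₁ ε₂ : ℝ)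
    (h1 : fApprox (Metric.ball j r) a ≤ ε₁)
    (h2 : fApprox (Metric.ball k r) a ≤ ε₂)
    (hb_mem : b ∈ S (Metric.ball j r ∩ Metric.ball k r))
    (hb_best : ‖a - b‖ = fApprox (Metric.ball j r ∩ Metric.ball k r) a) :
    ‖a - b‖ ≤ ε₁ + ε₂ + min ε₁ ε₂ :=
  stmt_10_general S hS_ne E hE_fix hE_contr hE_loc fApprox hf j k r a b ε₁ ε₂ h1 h2 hb_best
end

section
/- Let h_q : C_q → C_{q+1}, q ≥ 0, be defined on skew-symmetric chains a : Λ^{q+1} → 𝔡_ℓ by (h_q a)_{j_0…j_{q+1}} = ∑_{Y∈𝔅_d} ∑_{k=0}^{q+1} (−1)^k (χ_Y(j_k)/|Y∩Λ|) · a^Y_{j_0…ĵ_k…j_{q+1}}, and let ∂_q : C_q → C_{q−1} be (∂_q a)_{j_1…j_q} = ∑_{j_0∈Λ} a_{j_0 j_1…j_q}. Then h_{q−1} ∘ ∂_q + ∂_{q+1} ∘ h_q = id on C_q for every q > 0. In particular the homology of the complex (C_•, ∂) vanishes in all positive degrees. -/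
/-!
For a single weight function `w` with `∑ w = 1`, the cone operator
`(h b)_{j₀…j_{n+1}} = ∑_k (-1)^k w(j_k) b_{j₀…ĵ_k…j_{n+1}}` satisfies
`(h b)(j :: js) = w(j) b(js) - (h (b(j :: ·)))(js)`; summing over `j` turns the second term into
`-(h ∂b)(js)`, so `h∂ + ∂h = id`. The operator `htpC` is the sum over bricks `Y` of the cone
operators with weight `w Y` applied to the component `P Y ∘ a`, and `∑_Y P Y = id` gives the
identity for `htpC`. The finiteness hypotheses are what allow exchanging the sums over `j` and `Y`.
-/

open Function

noncomputable section

variable {Λ B V : Type*}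

/-- The boundary operator on chains: `(∂a)_{j₁…j_q} = ∑_{j₀ ∈ Λ} a_{j₀ j₁ … j_q}`. -/
def bdryC [AddCommGroup V] {n : ℕ} (a : (Fin (n + 1) → Λ) → V) :
    (Fin n → Λ) → V :=
  fun js => ∑ᶠ j : Λ, a (Fin.cons j js)

/-- The contracting homotopy
`h_q(a)_{j₀…j_{q+1}} = ∑_{Y} ∑_k (-1)^k (χ_Y(j_k)/|Y∩Λ|) a^Y_{j₀…ĵ_k…j_{q+1}}`,
where `w Y j` encodes the weight `χ_Y(j)/|Y∩Λ|` and `P Y` the projection onto the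
brick component `𝔡^Y`. -/
def htpC [AddCommGroup V] [Module ℝ V] {n : ℕ} (w : B → Λ → ℝ) (P : B → V →ₗ[ℝ] V)
    (a : (Fin (n + 1) → Λ) → V) : (Fin (n + 2) → Λ) → V :=
  fun js => ∑ᶠ Y : B, ∑ k : Fin (n + 2),
    ((-1 : ℝ) ^ (k : ℕ) * w Y (js k)) • P Y (a (js ∘ k.succAbove))

section FiniteSupport

variable {α β M : Type*} [AddCommMonoid M]

theorem Function.HasFiniteSupport.uncurry {f : α → β → M} (hf : HasFiniteSupport f)
    (hfib : ∀ a, HasFiniteSupport (f a)) : HasFiniteSupport (uncurry f) := by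
  refine (hf.biUnion fun a _ => (Set.finite_singleton a).prod (hfib a)).subset ?_
  rintro ⟨a, b⟩ hab
  have hb : f a b ≠ 0 := hab
  exact Set.mem_biUnion (fun h => hb (by rw [h]; rfl)) ⟨rfl, hb⟩

theorem finsum_comm_of_hasFiniteSupport_uncurry {f : α → β → M}
    (hf : HasFiniteSupport (uncurry f)) : ∑ᶠ a, ∑ᶠ b, f a b = ∑ᶠ b, ∑ᶠ a, f a b := by
  have hswap : HasFiniteSupport (uncurry fun b a => f a b) :=
    hf.comp_of_injective Prod.swap_injective
  calc ∑ᶠ a, ∑ᶠ b, f a b = ∑ᶠ p, uncurry f p := (finsum_curry _ hf).symm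
    _ = ∑ᶠ p, uncurry f (Equiv.prodComm β α p) := (finsum_comp_equiv _).symm
    _ = ∑ᶠ b, ∑ᶠ a, f a b := finsum_curry _ hswap

end FiniteSupport

section Cone

variable {R : Type*} [Ring R] [AddCommGroup V] [Module R V]

def coneHtp {n : ℕ} (w : Λ → R) (b : (Fin (n + 1) → Λ) → V) : (Fin (n + 2) → Λ) → V :=
  fun js => ∑ k : Fin (n + 2), ((-1 : R) ^ (k : ℕ) * w (js k)) • b (js ∘ k.succAbove)

theorem coneHtp_cons {n : ℕ} (w : Λ → R) (b : (Fin (n + 2) → Λ) → V) (j : Λ)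
    (js : Fin (n + 2) → Λ) :
    coneHtp w b (Fin.cons j js) = w j • b js - coneHtp w (fun ks => b (Fin.cons j ks)) js := by
  unfold coneHtp
  rw [Fin.sum_univ_succ, sub_eq_add_neg, ← Finset.sum_neg_distrib]
  congr 1
  · simp
  · refine Finset.sum_congr rfl fun k _ => ?_
    have hface : (Fin.cons j js : Fin (n + 3) → Λ) ∘ k.succ.succAbove =
        Fin.cons j (js ∘ k.succAbove) := by
      funext i
      refine Fin.cases ?_ (fun i => ?_) i <;> simp [Fin.succ_succAbove_succ]
    simp [hface, pow_succ, neg_smul]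

theorem coneHtp_finsum {ι : Type*} {n : ℕ} (w : Λ → R) (b : ι → (Fin (n + 1) → Λ) → V)
    (hb : ∀ ks, HasFiniteSupport fun i => b i ks) (js : Fin (n + 2) → Λ) :
    coneHtp w (fun ks => ∑ᶠ i, b i ks) js = ∑ᶠ i, coneHtp w (b i) js := by
  simp only [coneHtp, smul_finsum' _ (hb _)]
  exact (finsum_sum_comm _ _ fun k _ => (hb _).smul_right _).symm

theorem coneHtp_bdryC_add_bdryC_coneHtp {n : ℕ} {w : Λ → R} (hw_fin : HasFiniteSupport w)
    (hw_sum : ∑ᶠ j, w j = 1) {b : (Fin (n + 2) → Λ) → V}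
    (hb : ∀ ks, HasFiniteSupport fun j => b (Fin.cons j ks)) (js : Fin (n + 2) → Λ) :
    coneHtp w (bdryC b) js + bdryC (coneHtp w b) js = b js := by
  have hcone : HasFiniteSupport fun j => coneHtp w (fun ks => b (Fin.cons j ks)) js :=
    .sum (fun k : Fin (n + 2) => (hb (js ∘ k.succAbove)).fun_smul_right _) _
  have hbdry : bdryC (coneHtp w b) js = b js - coneHtp w (bdryC b) js := by
    simp only [bdryC, coneHtp_cons]
    rw [finsum_sub_distrib (hw_fin.fun_smul_left _) hcone, ← finsum_smul' hw_fin, hw_sum,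
      one_smul, ← coneHtp_finsum _ _ hb]
    rfl
  rw [hbdry, add_sub_cancel]

end Cone

theorem bdryC_comp {W F : Type*} [AddCommGroup V] [AddCommGroup W] [FunLike F V W]
    [AddMonoidHomClass F V W] (f : F) {n : ℕ} {a : (Fin (n + 1) → Λ) → V}
    (ha : ∀ ks, HasFiniteSupport fun j => a (Fin.cons j ks)) : bdryC (f ∘ a) = f ∘ bdryC a :=
  funext fun ks => (map_finsum f (ha ks)).symm

section Bricks

variable [AddCommGroup V] [Module ℝ V] {w : B → Λ → ℝ} {P : B → V →ₗ[ℝ] V}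

theorem htpC_eq_finsum_coneHtp {n : ℕ} (a : (Fin (n + 1) → Λ) → V) (js : Fin (n + 2) → Λ) :
    htpC w P a js = ∑ᶠ Y, coneHtp (w Y) (P Y ∘ a) js :=
  rfl

theorem hasFiniteSupport_coneHtp (hP_fin : ∀ v : V, HasFiniteSupport fun Y => P Y v) {n : ℕ}
    (a : (Fin (n + 1) → Λ) → V) (js : Fin (n + 2) → Λ) :
    HasFiniteSupport fun Y => coneHtp (w Y) (P Y ∘ a) js :=
  .sum (fun _ => (hP_fin _).fun_smul_right _) _

theorem hasFiniteSupport_uncurry_coneHtp_cons (hw_fin : ∀ Y, HasFiniteSupport (w Y))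
    (hP_fin : ∀ v : V, HasFiniteSupport fun Y => P Y v) {n : ℕ} {a : (Fin (n + 2) → Λ) → V}
    (ha : ∀ ks, HasFiniteSupport fun j => a (Fin.cons j ks)) (js : Fin (n + 2) → Λ) :
    HasFiniteSupport (uncurry fun j Y => coneHtp (w Y) (P Y ∘ a) (Fin.cons j js)) := by
  have hapex : HasFiniteSupport (uncurry fun (j : Λ) Y => w Y j • P Y (a js)) := by
    have hbase : HasFiniteSupport fun Y => fun j => w Y j • P Y (a js) :=
      (hP_fin (a js)).subset fun Y hY h => hY (by ext j; simp [h])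
    exact (hbase.uncurry fun Y => (hw_fin Y).fun_smul_left _).comp_of_injective
      Prod.swap_injective
  have hface : ∀ ks, HasFiniteSupport (uncurry fun j Y => P Y (a (Fin.cons j ks))) :=
    fun ks => ((ha ks).fun_comp (g := fun v Y => P Y v) (by ext; simp)).uncurry fun j => hP_fin _
  simp only [coneHtp_cons]
  exact hapex.fun_sub
    (.sum (fun k : Fin (n + 2) => (hface (js ∘ k.succAbove)).fun_smul_right _) _)

end Bricks

theorem stmt_13_general [AddCommGroup V] [Module ℝ V] (q : ℕ)
    (w : B → Λ → ℝ) (P : B → V →ₗ[ℝ] V)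
    (hw_fin : ∀ Y : B, (Function.support (w Y)).Finite)
    (hw_sum : ∀ Y : B, (∑ᶠ j : Λ, w Y j) = 1)
    (hP_fin : ∀ v : V, (Function.support fun Y : B => P Y v).Finite)
    (hP_sum : ∀ v : V, (∑ᶠ Y : B, P Y v) = v)
    (a : (Fin (q + 2) → Λ) → V)
    (ha_fin : ∀ js : Fin (q + 1) → Λ,
      (Function.support fun j : Λ => a (Fin.cons j js)).Finite) :
    ∀ js : Fin (q + 2) → Λ,
      htpC w P (bdryC a) js + bdryC (htpC w P a) js = a js := by
  intro js
  have hPa (Y : B) (ks : Fin (q + 1) → Λ) :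
      HasFiniteSupport fun j => (P Y ∘ a) (Fin.cons j ks) :=
    HasFiniteSupport.fun_comp (g := P Y) (ha_fin ks) (map_zero _)
  have hcone (Y : B) : bdryC (coneHtp (w Y) (P Y ∘ a)) js =
      P Y (a js) - coneHtp (w Y) (bdryC (P Y ∘ a)) js :=
    eq_sub_of_add_eq' (coneHtp_bdryC_add_bdryC_coneHtp (hw_fin Y) (hw_sum Y) (hPa Y) js)
  have hbdry (Y : B) : bdryC (P Y ∘ a) = P Y ∘ bdryC a := bdryC_comp (P Y) ha_fin
  have hhtp_bdry : htpC w P (bdryC a) js = ∑ᶠ Y, coneHtp (w Y) (bdryC (P Y ∘ a)) js := by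
    simp only [hbdry]
    exact htpC_eq_finsum_coneHtp _ js
  have hbdry_htp : bdryC (htpC w P a) js = ∑ᶠ Y, bdryC (coneHtp (w Y) (P Y ∘ a)) js :=
    finsum_comm_of_hasFiniteSupport_uncurry
      (hasFiniteSupport_uncurry_coneHtp_cons hw_fin hP_fin ha_fin js)
  have hfin : HasFiniteSupport fun Y => coneHtp (w Y) (bdryC (P Y ∘ a)) js := by
    simp only [hbdry]
    exact hasFiniteSupport_coneHtp hP_fin _ js
  rw [hhtp_bdry, hbdry_htp, finsum_congr hcone, finsum_sub_distrib (hP_fin _) hfin, hP_sum]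
  abel

/-- `h_{q-1} ∘ ∂_q + ∂_{q+1} ∘ h_q = id` on skew-symmetric chains of degree `q+1 > 0`;
hence the homology of the complex of uniformly local chains vanishes in positive
degrees.  Here `w Y` has finite support summing to `1` (`χ_Y/|Y∩Λ|` for a brick `Y`),
and `P Y` are the brick-component projections with `∑_Y P Y v = v` (finitely many
nonzero terms). -/
theorem stmt_13 [AddCommGroup V] [Module ℝ V] (q : ℕ)
    (w : B → Λ → ℝ) (P : B → V →ₗ[ℝ] V)
    (hw_fin : ∀ Y : B, (Function.support (w Y)).Finite)
    (hw_sum : ∀ Y : B, (∑ᶠ j : Λ, w Y j) = 1)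
    (hP_fin : ∀ v : V, (Function.support fun Y : B => P Y v).Finite)
    (hP_sum : ∀ v : V, (∑ᶠ Y : B, P Y v) = v)
    (a : (Fin (q + 2) → Λ) → V)
    (hskew : ∀ (js : Fin (q + 2) → Λ) (σ : Equiv.Perm (Fin (q + 2))),
      a (js ∘ σ) = (Equiv.Perm.sign σ : ℤ) • a js)
    (ha_fin : ∀ js : Fin (q + 1) → Λ,
      (Function.support fun j : Λ => a (Fin.cons j js)).Finite) :
    ∀ js : Fin (q + 2) → Λ,
      htpC w P (bdryC a) js + bdryC (htpC w P a) js = a js :=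
  stmt_13_general q w P hw_fin hw_sum hP_fin hP_sum a ha_fin

end
end

section
/- With ∂_0 : C_0 → 𝔇 defined by (∂_0 a)^Y = ∑_{j∈Λ} a^Y_j and h_{−1} : 𝔇 → C_0 defined by h_{−1}(A)_j = ∑_{Y∈𝔅_d} (χ_Y(j)/|Y∩Λ|)·A^Y, one has ∂_0 ∘ h_{−1} = id on 𝔇. Consequently the map ρ : C_0/im(∂_1) → 𝔇 induced by ∂_0 is surjective. -/
section OrthogonalFamily

variable {R B Λ V : Type*} [Semiring R] [AddCommMonoid V] [Module R V] [DecidableEq B]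

theorem LinearMap.map_finsum_smul_of_orthogonal (P : V →ₗ[R] V) {A : B → V} (c : B → R)
    {Y : B} (hP : ∀ Z, P (A Z) = if Y = Z then A Z else 0)
    (hfin : (Function.support fun Z => c Z • A Z).Finite) :
    P (∑ᶠ Z, c Z • A Z) = c Y • A Y := by
  have hsingle : ∀ Z, P (c Z • A Z) = if Y = Z then c Y • A Y else 0 := by
    intro Z
    rw [map_smul, hP]
    split_ifs with hYZ
    · rw [hYZ]
    · exact smul_zero _
  calc P (∑ᶠ Z, c Z • A Z) = ∑ᶠ Z, P (c Z • A Z) := P.toAddMonoidHom.map_finsum hfin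
    _ = ∑ᶠ Z, if Y = Z then c Y • A Y else 0 := finsum_congr hsingle
    _ = c Y • A Y := by
      rw [finsum_eq_single _ Y fun Z hZY => if_neg (Ne.symm hZY), if_pos rfl]

theorem finsum_map_finsum_smul_of_orthogonal (w : B → Λ → R) (P : B → V →ₗ[R] V) {A : B → V}
    (hw_sum : ∀ Y, ∑ᶠ j, w Y j = 1)
    (hA_orth : ∀ Y Z, P Y (A Z) = if Y = Z then A Z else 0)
    (hA_fin : ∀ j, (Function.support fun Y => w Y j • A Y).Finite) (Y : B) :
    ∑ᶠ j, P Y (∑ᶠ Z, w Z j • A Z) = A Y :=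
  calc ∑ᶠ j, P Y (∑ᶠ Z, w Z j • A Z) = ∑ᶠ j, w Y j • A Y :=
        finsum_congr fun j => (P Y).map_finsum_smul_of_orthogonal _ (hA_orth Y) (hA_fin j)
    _ = (∑ᶠ j, w Y j) • A Y := (finsum_smul' (hasFiniteSupport_of_finsum_eq_one (hw_sum Y)) _).symm
    _ = A Y := by rw [hw_sum Y, one_smul]

end OrthogonalFamily

theorem stmt_14_general {Λ B V : Type*} [DecidableEq B] [AddCommGroup V] [Module ℝ V]
    (w : B → Λ → ℝ) (P : B → V →ₗ[ℝ] V)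
    (hw_sum : ∀ Y : B, (∑ᶠ j : Λ, w Y j) = 1)
    (A : B → V)
    (hA_orth : ∀ Y Z : B, P Y (A Z) = if Y = Z then A Z else 0)
    (hA_fin : ∀ j : Λ, (Function.support fun Y : B => w Y j • A Y).Finite) :
    (∀ Y : B, (∑ᶠ j : Λ, P Y (∑ᶠ Z : B, w Z j • A Z)) = A Y) ∧
    (∃ a : Λ → V, ∀ Y : B, (∑ᶠ j : Λ, P Y (a j)) = A Y) :=
  have h_inverse := finsum_map_finsum_smul_of_orthogonal w P hw_sum hA_orth hA_fin
  ⟨h_inverse, _, h_inverse⟩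

/-- `∂₀ ∘ h₋₁ = id` on the space `𝔇` of brick-indexed interactions, where
`(∂₀ a)^Y = ∑_j P Y (a j)` and `h₋₁(A)_j = ∑_Y (χ_Y(j)/|Y∩Λ|) • A^Y`; consequently
the induced map `ρ : C₀/im ∂₁ → 𝔇` is surjective, i.e. every `A ∈ 𝔇` is `∂₀` of some
0-chain.  Here `w Y j` encodes `χ_Y(j)/|Y∩Λ|` (finite support, total weight 1), `P Y`
is the projection onto the brick component `𝔡^Y`, and the condition `A^Y ∈ 𝔡^Y` is
encoded by `P Y (A Z) = if Y = Z then A Z else 0`. -/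
theorem stmt_14 {Λ B V : Type*} [DecidableEq B] [AddCommGroup V] [Module ℝ V]
    (w : B → Λ → ℝ) (P : B → V →ₗ[ℝ] V)
    (hw_fin : ∀ Y : B, (Function.support (w Y)).Finite)
    (hw_sum : ∀ Y : B, (∑ᶠ j : Λ, w Y j) = 1)
    (A : B → V)
    (hA_orth : ∀ Y Z : B, P Y (A Z) = if Y = Z then A Z else 0)
    (hA_fin : ∀ j : Λ, (Function.support fun Y : B => w Y j • A Y).Finite) :
    (∀ Y : B, (∑ᶠ j : Λ, P Y (∑ᶠ Z : B, w Z j • A Z)) = A Y) ∧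
    (∃ a : Λ → V, ∀ Y : B, (∑ᶠ j : Λ, P Y (a j)) = A Y) :=
  stmt_14_general w P hw_sum A hA_orth hA_fin
end

section
/- Suppose a UL 0-chain a : Λ → 𝔡_ℓ satisfies ∑_{j∈Λ} a_j^Y = 0 for every brick Y ∈ 𝔅_d. Define b_{jk} := ∑_{Y∈𝔅_d} (χ_Y(j)/|Y∩Λ|)·a_k^Y − ∑_{Y∈𝔅_d} (χ_Y(k)/|Y∩Λ|)·a_j^Y for j, k ∈ Λ. Then b is a skew-symmetric UL 1-chain and (∂b)_j = ∑_{k∈Λ} b_{kj} = a_j for all j ∈ Λ. Consequently, the zeroth homology of the UL Noether complex augmented by ∂_0 vanishes: any 0-chain with ∂_0 a = 0 is a boundary. -/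
/-!
The chain `b` is skew-symmetric by construction. For its boundary, split `∑_k b_{kj}` into two
double sums and exchange the order of summation in each. Since the weights `χ_Y(·)/|Y∩Λ|` of a
brick sum to `1`, the first becomes `∑_Y a_j^Y = a_j`; the second becomes
`∑_Y (χ_Y(j)/|Y∩Λ|) • ∑_k a_k^Y`, which vanishes brick by brick because `a` is a cycle.
-/

open Function

section Finsum

variable {α β M : Type*} [AddCommMonoid M]

theorem finite_support_finsum {f : α → β → M}
    (hf : (support fun p : α × β => f p.1 p.2).Finite) :
    (support fun a => ∑ᶠ b, f a b).Finite := by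
  refine (hf.image Prod.fst).subset fun a ha => ?_
  obtain ⟨b, hb⟩ : ∃ b, f a b ≠ 0 := by
    by_contra! h
    exact ha (finsum_eq_zero_of_forall_eq_zero h)
  exact ⟨(a, b), hb, rfl⟩

theorem finsum_comm {f : α → β → M} (hf : (support fun p : α × β => f p.1 p.2).Finite) :
    ∑ᶠ a, ∑ᶠ b, f a b = ∑ᶠ b, ∑ᶠ a, f a b := by
  have hswap : (support fun q : β × α => f q.2 q.1).Finite :=
    hf.preimage Prod.swap_injective.injOn
  rw [← finsum_curry _ hf, ← finsum_curry _ hswap,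
    ← finsum_comp_equiv (Equiv.prodComm β α)]
  rfl

end Finsum

section Weights

variable {α β R M : Type*} [Semiring R] [AddCommMonoid M] [Module R M]

theorem finite_support_smul_of_finite_rows {w : β → α → R} (hw : ∀ Y, (support (w Y)).Finite)
    {x : β → M} (hx : (support x).Finite) :
    (support fun p : α × β => w p.2 p.1 • x p.2).Finite := by
  refine (hx.biUnion fun Y _ => (hw Y).prod (Set.finite_singleton Y)).subset fun p hp => ?_
  exact Set.mem_biUnion (right_ne_zero_of_smul hp)
    ⟨left_ne_zero_of_smul hp, Set.mem_singleton p.2⟩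

theorem finsum_finsum_smul_of_finsum_eq_one {w : β → α → R}
    (hw_fin : ∀ Y, (support (w Y)).Finite) (hw_sum : ∀ Y, ∑ᶠ k, w Y k = 1)
    {x : β → M} (hx : (support x).Finite) :
    ∑ᶠ k, ∑ᶠ Y, w Y k • x Y = ∑ᶠ Y, x Y := by
  rw [finsum_comm (finite_support_smul_of_finite_rows hw_fin hx)]
  refine finsum_congr fun Y => ?_
  rw [← finsum_smul' (hw_fin Y), hw_sum Y, one_smul]

theorem finsum_finsum_smul_eq_zero {c : β → R} {f : α → β → M}
    (hf : ∀ Y, (support fun k => f k Y).Finite)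
    (hcf : (support fun p : α × β => c p.2 • f p.1 p.2).Finite)
    (hf_sum : ∀ Y, ∑ᶠ k, f k Y = 0) :
    ∑ᶠ k, ∑ᶠ Y, c Y • f k Y = 0 := by
  rw [finsum_comm hcf]
  refine finsum_eq_zero_of_forall_eq_zero fun Y => ?_
  rw [← smul_finsum' (c Y) (hf Y), hf_sum Y, smul_zero]

end Weights

/-- `w Y j` encodes `χ_Y(j)/|Y∩Λ|` and `P Y` the brick-component projection, `a^Y_j = P Y (a j)`. -/
theorem stmt_15 {Λ B V : Type*} [AddCommGroup V] [Module ℝ V]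
    (w : B → Λ → ℝ) (P : B → V →ₗ[ℝ] V)
    (hw_fin : ∀ Y : B, (Function.support (w Y)).Finite)
    (hw_sum : ∀ Y : B, (∑ᶠ j : Λ, w Y j) = 1)
    (hP_fin : ∀ v : V, (Function.support fun Y : B => P Y v).Finite)
    (hP_sum : ∀ v : V, (∑ᶠ Y : B, P Y v) = v)
    (a : Λ → V)
    (ha_fin : ∀ Y : B, (Function.support fun j : Λ => P Y (a j)).Finite)
    (hpair : ∀ j : Λ,
      (Function.support fun p : Λ × B => w p.2 j • P p.2 (a p.1)).Finite)
    (hcycle : ∀ Y : B, (∑ᶠ j : Λ, P Y (a j)) = 0)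
    (b : Λ → Λ → V)
    (hb : ∀ j k : Λ,
      b j k = (∑ᶠ Y : B, w Y j • P Y (a k)) - ∑ᶠ Y : B, w Y k • P Y (a j)) :
    (∀ j k : Λ, b j k = - b k j) ∧ (∀ j : Λ, (∑ᶠ k : Λ, b k j) = a j) := by
  refine ⟨fun j k => by rw [hb, hb]; abel, fun j => ?_⟩
  have hweighted := finite_support_smul_of_finite_rows hw_fin (hP_fin (a j))
  calc ∑ᶠ k, b k j
      = ∑ᶠ k, ((∑ᶠ Y, w Y k • P Y (a j)) - ∑ᶠ Y, w Y j • P Y (a k)) :=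
        finsum_congr fun k => hb k j
    _ = (∑ᶠ k, ∑ᶠ Y, w Y k • P Y (a j)) - ∑ᶠ k, ∑ᶠ Y, w Y j • P Y (a k) :=
        finsum_sub_distrib (finite_support_finsum hweighted) (finite_support_finsum (hpair j))
    _ = a j - 0 := by
        rw [finsum_finsum_smul_of_finsum_eq_one hw_fin hw_sum (hP_fin (a j)), hP_sum,
          finsum_finsum_smul_eq_zero ha_fin (hpair j) hcycle]
    _ = a j := sub_zero _
end

section
/- Let H be a derivation with gapped ground state ψ with gap ≥ Δ > 0, realized in the GNS representation by a positive self-adjoint operator Ĥ annihilating the cyclic vector Ω, with spectrum in {0} ∪ [Δ, ∞) and 0 a simple eigenvalue with eigenvector Ω. Let w_Δ : ℝ → ℝ be an even integrable function with ∫ w_Δ(t) dt = 1 whose Fourier transform ŵ_Δ(ω) = ∫ w_Δ(t) e^{−iωt} dt vanishes for |ω| > Δ' with 0 < Δ' < Δ. Define I(A) := ∫_{−∞}^{∞} w_Δ(t) e^{itĤ} A e^{−itĤ} dt for bounded operators A. Then for all bounded A, B: ⟨Ω, I(A)·B·Ω⟩ = ⟨Ω, I(A)·Ω⟩·⟨Ω,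 B·Ω⟩. -/
/-!
The averaged operator `T = ∫ w(t) e^{-itĤ} dt` is `ŵ(Ĥ)` in the continuous functional calculus,
`ŵ` being the Fourier transform of `w`. The gap inequality confines the spectrum of `Ĥ` to
`{0} ∪ [Δ, ∞)`, where `z ŵ(z)` vanishes, so `Ĥ T = 0`. The kernel of `Ĥ` is spanned by `Ω` and
`e^{itĤ}` fixes `Ω`, so with `∫ w = 1` the operator `T` is the projection `|Ω⟩⟨Ω|`. Finally
`⟨Ω, I(A) x⟩ = ⟨Ω, A T x⟩ = ⟨Ω, x⟩ ⟨Ω, A Ω⟩`, which gives the claim for `x = B Ω` and `x = Ω`.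
-/

open MeasureTheory

section Exponential

open Complex

variable {A : Type*} [CStarAlgebra A]

lemma ofReal_smul_I_smul_mem_skewAdjoint {a : A} (ha : IsSelfAdjoint a) (t : ℝ) :
    (t : ℂ) • (I • a) ∈ skewAdjoint A := by
  rw [skewAdjoint.mem_iff, star_smul, star_smul, ha.star_eq, Complex.star_def,
    Complex.conj_ofReal, Complex.conj_I, neg_smul, smul_neg]

lemma continuous_exp_ofReal_smul (x : A) :
    Continuous fun t : ℝ => NormedSpace.exp ((t : ℂ) • x) := by
  -- the analytic API of `NormedSpace.exp` is stated over `ℚ`, which `A` is not given an instance of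
  let : NormedAlgebra ℚ A := .restrictScalars ℚ ℂ A
  fun_prop

lemma norm_exp_ofReal_smul_I_smul_le_one {a : A} (ha : IsSelfAdjoint a) (t : ℝ) :
    ‖NormedSpace.exp ((t : ℂ) • (I • a))‖ ≤ 1 := by
  nontriviality A
  let : NormedAlgebra ℚ A := .restrictScalars ℚ ℂ A
  exact (CStarRing.norm_of_mem_unitary (NormedSpace.exp_mem_unitary_of_mem_skewAdjoint
    (ofReal_smul_I_smul_mem_skewAdjoint ha t))).le

lemma exp_ofReal_smul_I_smul_eq_cfc (a : A) [IsStarNormal a] (t : ℝ) :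
    NormedSpace.exp ((t : ℂ) • (I • a)) = cfc (fun z => exp (I * t * z)) a := by
  rw [cfc_comp_const_mul (I * t) exp a, CFC.complex_exp_eq_normedSpace_exp, smul_smul,
    mul_comm]

lemma integral_smul_exp_eq_cfc {a : A} (ha : IsSelfAdjoint a) {w : ℝ → ℂ} (hw : Integrable w) :
    ∫ t : ℝ, w t • NormedSpace.exp (((-t : ℝ) : ℂ) • (I • a))
      = cfc (fun z => ∫ t : ℝ, w t * exp (-I * z * t)) a := by
  let e : C(ℝ, C(spectrum ℂ a, ℂ)) := ContinuousMap.curry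
    ⟨fun p : ℝ × spectrum ℂ a => exp (-I * p.2 * p.1), by fun_prop⟩
  have he : ∀ t, ‖e t‖ ≤ 1 := fun t => (ContinuousMap.norm_le _ zero_le_one).mpr fun z => by
    have : (z : ℂ).im = 0 := by rw [ha.mem_spectrum_eq_re z.2]; simp
    simp [e, Complex.norm_exp, this]
  have hmkD : ∀ t, ContinuousMap.mkD ((spectrum ℂ a).domRestrict fun z => w t * exp (-I * z * t)) 0
      = w t • e t := fun t => by
    ext z
    rw [ContinuousMap.mkD_apply_of_continuousOn (by fun_prop)]
    rfl
  rw [cfc_integral' _ a (.of_forall fun t => by fun_prop)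
    (by simpa only [hmkD] using (hw.smul_bdd 1 e.continuous.aestronglyMeasurable (.of_forall he) :
      Integrable fun t => w t • e t))]
  congr 1
  ext1 t
  have := ha.isStarNormal
  rw [cfc_const_mul _ _ a, exp_ofReal_smul_I_smul_eq_cfc]
  congr 2
  ext z
  push_cast
  ring_nf

lemma mul_cfc_eq_zero (a : A) [IsStarNormal a] {g : ℂ → ℂ}
    (hg : ∀ z ∈ spectrum ℂ a, z ≠ 0 → g z = 0) : a * cfc g a = 0 := by
  by_cases hgc : ContinuousOn g (spectrum ℂ a)
  · calc a * cfc g a = cfc (fun z => z * g z) a := by rw [cfc_mul (fun z => z) g a, cfc_id' ℂ a]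
      _ = cfc (0 : ℂ → ℂ) a := cfc_congr fun z hz => by
          by_cases hz0 : z = 0
          · simp [hz0]
          · simp [hg z hz hz0]
      _ = 0 := cfc_zero ℂ a
  · rw [cfc_apply_of_not_continuousOn a hgc, mul_zero]

end Exponential

lemma exp_apply_of_apply_eq_zero {E : Type*} [NormedAddCommGroup E] [NormedSpace ℂ E]
    [CompleteSpace E] {X : E →L[ℂ] E} {v : E} (hv : X v = 0) :
    NormedSpace.exp X v = v := by
  have hXn : ∀ n ≠ 0, (X ^ n) v = 0 := fun n hn => by
    obtain ⟨k, rfl⟩ := Nat.exists_eq_succ_of_ne_zero hn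
    rw [pow_succ, mul_apply_eq_comp, hv, map_zero]
  rw [NormedSpace.exp_eq_tsum ℂ, ← ContinuousLinearMap.apply_apply v,
    ContinuousLinearMap.map_tsum _ (NormedSpace.expSeries_summable' X), tsum_eq_single 0]
  · simp
  · intro n hn
    simp [hXn n hn]

section Operators

variable {E : Type*} [NormedAddCommGroup E] [InnerProductSpace ℂ E] [CompleteSpace E]

lemma inner_exp_apply_eq_inner {X : E →L[ℂ] E} (hX : X ∈ skewAdjoint (E →L[ℂ] E)) {Ω : E}
    (hXΩ : X Ω = 0) (v : E) : inner ℂ Ω (NormedSpace.exp X v) = inner ℂ Ω v := by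
  let : NormedAlgebra ℚ (E →L[ℂ] E) := .restrictScalars ℚ ℂ (E →L[ℂ] E)
  have hstar : star X Ω = 0 := by rw [skewAdjoint.mem_iff.mp hX, neg_apply, hXΩ, neg_zero]
  rw [← ContinuousLinearMap.adjoint_inner_left, ← ContinuousLinearMap.star_eq_adjoint,
    NormedSpace.star_exp, exp_apply_of_apply_eq_zero hstar]

lemma inner_integral_apply {X : Type*} [MeasurableSpace X] {μ : Measure X}
    {f : X → E →L[ℂ] E} (hf : Integrable f μ) (Ω x : E) :
    inner ℂ Ω ((∫ s, f s ∂μ) x) = ∫ s, inner ℂ Ω (f s x) ∂μ := by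
  rw [ContinuousLinearMap.integral_apply hf, integral_inner (hf.apply_continuousLinearMap x)]

variable {Ω : E} {u : ℝ → E →L[ℂ] E} {w : ℝ → ℂ}

lemma inner_integral_smul_apply (hw : Integrable w) (hu : Continuous u) (hu1 : ∀ t, ‖u t‖ ≤ 1)
    (huΩ : ∀ t v, inner ℂ Ω (u t v) = inner ℂ Ω v) (x : E) :
    inner ℂ Ω ((∫ t, w t • u t) x) = (∫ t, w t) * inner ℂ Ω x := by
  have hf : Integrable fun t => w t • u t :=
    hw.smul_bdd 1 hu.aestronglyMeasurable (.of_forall hu1)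
  rw [inner_integral_apply hf]
  simp [huΩ, integral_mul_const]

lemma inner_integral_smul_conj_apply (hw : Integrable w) (hu : Continuous u)
    (hu1 : ∀ t, ‖u t‖ ≤ 1) (huΩ : ∀ t v, inner ℂ Ω (u t v) = inner ℂ Ω v) (A : E →L[ℂ] E)
    (x : E) :
    inner ℂ Ω ((∫ t, w t • (u t * A * u (-t))) x)
      = inner ℂ Ω (A ((∫ t, w t • u (-t)) x)) := by
  have hu' : Continuous fun t => u (-t) := hu.comp continuous_neg
  have hconj : ∀ t, ‖u t * A * u (-t)‖ ≤ ‖A‖ := fun t =>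
    calc ‖u t * A * u (-t)‖ ≤ ‖u t‖ * ‖A‖ * ‖u (-t)‖ := norm_mul₃_le
      _ ≤ 1 * ‖A‖ * 1 := by gcongr <;> exact hu1 _
      _ = ‖A‖ := by ring
  have hf : Integrable fun t => w t • u (-t) :=
    hw.smul_bdd 1 hu'.aestronglyMeasurable (.of_forall fun t => hu1 _)
  have hg : Integrable fun t => w t • (u t * A * u (-t)) :=
    hw.smul_bdd ‖A‖ ((hu.mul continuous_const).mul hu').aestronglyMeasurable (.of_forall hconj)
  rw [← ContinuousLinearMap.adjoint_inner_left A, inner_integral_apply hf, inner_integral_apply hg]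
  simp [huΩ, ContinuousLinearMap.adjoint_inner_left]

end Operators

section SpectralGap

open Complex

variable {H : Type*} [NormedAddCommGroup H] [InnerProductSpace ℂ H]
  {Hop : H →L[ℂ] H} {Ω : H} {Δ : ℝ}

lemma eq_inner_smul_of_apply_eq_zero (hΩ : ‖Ω‖ = 1) (hHΩ : Hop Ω = 0) (hΔ : 0 < Δ)
    (hgap : ∀ x : H, Δ * (‖x‖ ^ 2 - ‖(inner ℂ Ω x : ℂ)‖ ^ 2) ≤ (inner ℂ x (Hop x) : ℂ).re)
    {z : H} (hz : Hop z = 0) : z = (inner ℂ Ω z : ℂ) • Ω := by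
  set y := z - (inner ℂ Ω z : ℂ) • Ω
  have hyΩ : (inner ℂ Ω y : ℂ) = 0 := by simp [y, hΩ]
  have hHy : Hop y = 0 := by simp [y, hz, hHΩ]
  have hy : ‖y‖ ^ 2 ≤ 0 := by
    have := hgap y
    rw [hHy, hyΩ] at this
    simp only [inner_zero_right, Complex.zero_re, norm_zero] at this
    nlinarith
  have : y = 0 := by simpa using le_antisymm hy (sq_nonneg _)
  exact sub_eq_zero.mp this

variable [CompleteSpace H]

lemma inner_exp_ofReal_smul_I_smul_apply (hsa : IsSelfAdjoint Hop) (hHΩ : Hop Ω = 0) (t : ℝ)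
    (v : H) : inner ℂ Ω (NormedSpace.exp ((t : ℂ) • (I • Hop)) v) = inner ℂ Ω v :=
  inner_exp_apply_eq_inner (ofReal_smul_I_smul_mem_skewAdjoint hsa t) (by simp [hHΩ]) v

lemma min_sq_mul_norm_sq_le_norm_smul_sub_apply_sq (hsa : IsSelfAdjoint Hop) (hΩ : ‖Ω‖ = 1)
    (hHΩ : Hop Ω = 0)
    (hgap : ∀ x : H, Δ * (‖x‖ ^ 2 - ‖(inner ℂ Ω x : ℂ)‖ ^ 2) ≤ (inner ℂ x (Hop x) : ℂ).re)
    {r : ℝ} (hr : r ≤ Δ) (x : H) :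
    min (r ^ 2) ((Δ - r) ^ 2) * ‖x‖ ^ 2 ≤ ‖(r : ℂ) • x - Hop x‖ ^ 2 := by
  set c : ℂ := inner ℂ Ω x
  set y := x - c • Ω
  have hyΩ : (inner ℂ Ω y : ℂ) = 0 := by simp [y, c, hΩ]
  have hHyΩ : (inner ℂ Ω (Hop y) : ℂ) = 0 := by
    rw [← hsa.adjoint_eq, ContinuousLinearMap.adjoint_inner_right, hHΩ, inner_zero_left]
  set v := (r : ℂ) • y - Hop y
  have hx : x = c • Ω + y := by simp [y]
  have hv : (r : ℂ) • x - Hop x = ((r : ℂ) * c) • Ω + v := by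
    rw [hx]; simp only [v, map_add, map_smul, hHΩ, smul_zero, zero_add, smul_add, smul_smul]
    abel
  have hnx : ‖x‖ ^ 2 = ‖c‖ ^ 2 + ‖y‖ ^ 2 := by
    rw [hx, sq, sq, norm_add_sq_eq_norm_sq_add_norm_sq_of_inner_eq_zero _ _
      (by rw [inner_smul_left, hyΩ, mul_zero]), norm_smul, hΩ, mul_one, sq]
  have hnv : ‖(r : ℂ) • x - Hop x‖ ^ 2 = r ^ 2 * ‖c‖ ^ 2 + ‖v‖ ^ 2 := by
    rw [hv, sq, sq, norm_add_sq_eq_norm_sq_add_norm_sq_of_inner_eq_zero _ _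
      (by rw [inner_smul_left, inner_sub_right, inner_smul_right, hyΩ, hHyΩ]; ring),
      norm_smul, hΩ, mul_one, norm_mul, Complex.norm_real, Real.norm_eq_abs]
    nlinarith [sq_abs r]
  have hvy : (Δ - r) * ‖y‖ ^ 2 ≤ ‖y‖ * ‖v‖ := by
    have hgy := hgap y
    rw [hyΩ, norm_zero] at hgy
    calc (Δ - r) * ‖y‖ ^ 2 ≤ -(inner ℂ y v : ℂ).re := by
          have : (inner ℂ y v : ℂ).re = r * ‖y‖ ^ 2 - (inner ℂ y (Hop y) : ℂ).re := by
            simp [v, inner_self_eq_norm_sq_to_K, ← Complex.ofReal_pow]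
          nlinarith
      _ ≤ ‖(inner ℂ y v : ℂ)‖ := (neg_le_abs _).trans (Complex.abs_re_le_norm _)
      _ ≤ ‖y‖ * ‖v‖ := norm_inner_le_norm y v
  have hvy' : (Δ - r) ^ 2 * ‖y‖ ^ 2 ≤ ‖v‖ ^ 2 := by
    rcases (norm_nonneg y).eq_or_lt with h0 | hpos
    · rw [← h0]; simp
    · have : (Δ - r) * ‖y‖ ≤ ‖v‖ := by nlinarith
      nlinarith [mul_nonneg (sub_nonneg.mpr hr) hpos.le]
  rw [hnx, hnv]
  nlinarith [min_le_left (r ^ 2) ((Δ - r) ^ 2), min_le_right (r ^ 2) ((Δ - r) ^ 2),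
    sq_nonneg ‖c‖, sq_nonneg ‖y‖]

lemma eq_zero_or_le_re_of_mem_spectrum (hsa : IsSelfAdjoint Hop)
    (hΩ : ‖Ω‖ = 1) (hHΩ : Hop Ω = 0)
    (hgap : ∀ x : H, Δ * (‖x‖ ^ 2 - ‖(inner ℂ Ω x : ℂ)‖ ^ 2) ≤ (inner ℂ x (Hop x) : ℂ).re)
    {z : ℂ} (hz : z ∈ spectrum ℂ Hop) : z = 0 ∨ Δ ≤ z.re := by
  by_contra! h
  obtain ⟨hz0, hzΔ⟩ := h
  set r := z.re
  have hzr : z = r := hsa.mem_spectrum_eq_re hz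
  have hr0 : r ≠ 0 := fun h => hz0 (by rw [hzr, h, Complex.ofReal_zero])
  set f := algebraMap ℂ (H →L[ℂ] H) z - Hop
  have hf : IsSelfAdjoint f :=
    (IsSelfAdjoint.algebraMap _ (by simp [hzr, IsSelfAdjoint, Complex.conj_ofReal])).sub hsa
  have hm : 0 < min (r ^ 2) ((Δ - r) ^ 2) := lt_min (by positivity) (by nlinarith)
  -- `f` is self-adjoint and bounded below, so `f * f` is coercive, hence invertible
  refine spectrum.mem_iff.mp hz (isUnit_mul_self_iff.mp
    (ContinuousLinearMap.isUnit_of_forall_le_norm_inner_map _ (c := ⟨_, hm.le⟩) hm fun x => ?_))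
  have hfx : f x = (r : ℂ) • x - Hop x := by simp [f, hzr, Algebra.algebraMap_eq_smul_one]
  calc ‖x‖ ^ 2 * min (r ^ 2) ((Δ - r) ^ 2) ≤ ‖f x‖ ^ 2 := by
        rw [mul_comm, hfx]
        exact min_sq_mul_norm_sq_le_norm_smul_sub_apply_sq hsa hΩ hHΩ hgap hzΔ.le x
    _ = ‖(inner ℂ ((f * f) x) x : ℂ)‖ := by
        rw [mul_apply_eq_comp, ← ContinuousLinearMap.adjoint_inner_right, hf.adjoint_eq,
          inner_self_eq_norm_sq_to_K]
        simp

lemma integral_smul_exp_apply_eq_inner_smul (hsa : IsSelfAdjoint Hop) (hΩ : ‖Ω‖ = 1)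
    (hHΩ : Hop Ω = 0) (hΔ : 0 < Δ)
    (hgap : ∀ x : H, Δ * (‖x‖ ^ 2 - ‖(inner ℂ Ω x : ℂ)‖ ^ 2) ≤ (inner ℂ x (Hop x) : ℂ).re)
    {w : ℝ → ℂ} (hw : Integrable w) (hw_norm : ∫ t, w t = 1)
    (hw_fourier : ∀ ω : ℝ, Δ ≤ ω → ∫ t : ℝ, w t * exp (-I * ω * t) = 0) (x : H) :
    (∫ t : ℝ, w t • NormedSpace.exp (((-t : ℝ) : ℂ) • (I • Hop))) x
      = (inner ℂ Ω x : ℂ) • Ω := by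
  have := hsa.isStarNormal
  set T := ∫ t : ℝ, w t • NormedSpace.exp (((-t : ℝ) : ℂ) • (I • Hop)) with hT
  have hHT : Hop * T = 0 := by
    rw [hT, integral_smul_exp_eq_cfc hsa hw]
    refine mul_cfc_eq_zero Hop fun z hz hz0 => ?_
    obtain h | h := eq_zero_or_le_re_of_mem_spectrum hsa hΩ hHΩ hgap hz
    · exact absurd h hz0
    · rw [hsa.mem_spectrum_eq_re hz]
      exact hw_fourier _ h
  have hHTx : Hop (T x) = 0 := by rw [← mul_apply_eq_comp, hHT]; rfl
  rw [eq_inner_smul_of_apply_eq_zero hΩ hHΩ hΔ hgap hHTx,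
    inner_integral_smul_apply (u := fun t => NormedSpace.exp (((-t : ℝ) : ℂ) • (I • Hop))) hw
      ((continuous_exp_ofReal_smul _).comp continuous_neg)
      (fun t => norm_exp_ofReal_smul_I_smul_le_one hsa _)
      (fun t => inner_exp_ofReal_smul_I_smul_apply hsa hHΩ _),
    hw_norm, one_mul]

end SpectralGap

theorem stmt_17_general {H : Type*} [NormedAddCommGroup H] [InnerProductSpace ℂ H]
    [CompleteSpace H]
    (Hop : H →L[ℂ] H) (hsa : IsSelfAdjoint Hop)
    (Ω : H) (hΩ : ‖Ω‖ = 1) (hHΩ : Hop Ω = 0)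
    (Δ Δ' : ℝ) (hΔ' : 0 < Δ') (hΔ'Δ : Δ' < Δ)
    (hgap : ∀ x : H, Δ * (‖x‖ ^ 2 - ‖(inner ℂ Ω x : ℂ)‖ ^ 2) ≤ (inner ℂ x (Hop x) : ℂ).re)
    (w : ℝ → ℝ) (hw_int : Integrable w)
    (hw_norm : (∫ t : ℝ, w t) = 1)
    (hw_fourier : ∀ ω : ℝ, Δ' < |ω| →
      (∫ t : ℝ, (w t : ℂ) * Complex.exp (-Complex.I * ω * t)) = 0)
    (U : ℝ → (H →L[ℂ] H))
    (hU : ∀ t : ℝ, U t = NormedSpace.exp ((t : ℂ) • (Complex.I • Hop)))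
    (I : (H →L[ℂ] H) → (H →L[ℂ] H))
    (hI : ∀ A : H →L[ℂ] H, I A = ∫ t : ℝ, (w t : ℂ) • (U t * A * U (-t)))
    (A B : H →L[ℂ] H) :
    (inner ℂ Ω ((I A * B) Ω) : ℂ) = (inner ℂ Ω ((I A) Ω) : ℂ) * (inner ℂ Ω (B Ω) : ℂ) := by
  obtain rfl : U = fun t : ℝ => NormedSpace.exp ((t : ℂ) • (Complex.I • Hop)) := funext hU
  have hw : Integrable fun t => (w t : ℂ) := hw_int.ofReal
  have hproj := integral_smul_exp_apply_eq_inner_smul hsa hΩ hHΩ (hΔ'.trans hΔ'Δ) hgap hw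
    (by rw [integral_complex_ofReal, hw_norm, Complex.ofReal_one])
    (fun ω hω => hw_fourier ω (hΔ'Δ.trans_le (hω.trans (le_abs_self ω))))
  have hIA : ∀ x, inner ℂ Ω (I A x) = inner ℂ Ω x * inner ℂ Ω (A Ω) := fun x => by
    rw [hI, inner_integral_smul_conj_apply hw (continuous_exp_ofReal_smul _)
      (norm_exp_ofReal_smul_I_smul_le_one hsa)
      (inner_exp_ofReal_smul_I_smul_apply hsa hHΩ), hproj, map_smul, inner_smul_right, mul_comm]
  rw [mul_apply_eq_comp, hIA, hIA, inner_self_eq_one_of_norm_eq_one hΩ, one_mul, mul_comm]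

/-- Let `Ĥ` be a positive self-adjoint operator annihilating the unit vector `Ω`, with a
spectral gap `≥ Δ` above the simple ground state `Ω`.  Let `w_Δ` be an even integrable
function with `∫ w_Δ = 1` whose Fourier transform vanishes for `|ω| > Δ'` with
`0 < Δ' < Δ`, and let `I(A) = ∫ w_Δ(t) e^{itĤ} A e^{-itĤ} dt`.  Then
`⟨Ω, I(A) B Ω⟩ = ⟨Ω, I(A) Ω⟩ ⟨Ω, B Ω⟩` for all bounded operators `A`, `B`. -/
theorem stmt_17 {H : Type*} [NormedAddCommGroup H] [InnerProductSpace ℂ H]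
    [CompleteSpace H]
    (Hop : H →L[ℂ] H) (hsa : IsSelfAdjoint Hop)
    (Ω : H) (hΩ : ‖Ω‖ = 1) (hHΩ : Hop Ω = 0)
    (Δ Δ' : ℝ) (hΔ' : 0 < Δ') (hΔ'Δ : Δ' < Δ)
    (hgap : ∀ x : H, Δ * (‖x‖ ^ 2 - ‖(inner ℂ Ω x : ℂ)‖ ^ 2) ≤ (inner ℂ x (Hop x) : ℂ).re)
    (w : ℝ → ℝ) (hw_int : Integrable w)
    (hw_even : ∀ t : ℝ, w (-t) = w t)
    (hw_norm : (∫ t : ℝ, w t) = 1)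
    (hw_fourier : ∀ ω : ℝ, Δ' < |ω| →
      (∫ t : ℝ, (w t : ℂ) * Complex.exp (-Complex.I * ω * t)) = 0)
    (U : ℝ → (H →L[ℂ] H))
    (hU : ∀ t : ℝ, U t = NormedSpace.exp ((t : ℂ) • (Complex.I • Hop)))
    (I : (H →L[ℂ] H) → (H →L[ℂ] H))
    (hI : ∀ A : H →L[ℂ] H, I A = ∫ t : ℝ, (w t : ℂ) • (U t * A * U (-t)))
    (A B : H →L[ℂ] H) :
    (inner ℂ Ω ((I A * B) Ω) : ℂ) = (inner ℂ Ω ((I A) Ω) : ℂ) * (inner ℂ Ω (B Ω) : ℂ) :=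
  stmt_17_general Hop hsa Ω hΩ hHΩ Δ Δ' hΔ' hΔ'Δ hgap w hw_int hw_norm hw_fourier U hU I hI A B
end
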